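/- arXiv:1910.09274 — 8 statements merged into one kernel-verified Lean document; each statement's English description precedes it below -/
import Mathlib

section
/- Let X_1,…,X_{N²} be an orthonormal basis of the real vector space of N×N skew-Hermitian complex matrices with respect to the real inner product ⟨X,Y⟩ = N·Re(trace(X*Y)). Then for every A ∈ M_N(ℂ): ∑_{j=1}^{N²} X_j·A·X_j = −tr(A)·I, where tr(A) = (1/N)·trace(A) is the normalized trace and I is the N×N identity matrix. -/
/-!
Orthonormality and spanning give the completeness relation `Y = ∑ⱼ N·Re tr(Xⱼᴴ Y) Xⱼ` for
skew-Hermitian `Y`. For skew-Hermitian `Xⱼ` and `Y` the trace `tr(Xⱼ Y)` is real, so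
`N·Re tr(Xⱼᴴ Y) = -N tr(Xⱼ Y)` and the relation reads `∑ⱼ tr(Xⱼ Y) Xⱼ = -Y/N`. This is ℂ-linear
in `Y`, hence holds for every matrix, as the skew-Hermitian matrices span `M_N(ℂ)` over ℂ.
For a matrix unit `Y` it says `∑ⱼ (Xⱼ)ₐᵦ (Xⱼ)_cd = -δ_bc δ_ad / N`, and contracting this with
`A` gives `∑ⱼ Xⱼ A Xⱼ = -(tr A / N) I`.
-/

open Matrix ComplexStarModule

theorem Submodule.sum_apply_smul_eq_of_mem_span {ι R M : Type*} [Fintype ι] [DecidableEq ι]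
    [CommRing R] [AddCommGroup M] [Module R M] {v : ι → M} {φ : ι → M →ₗ[R] R}
    (hφv : ∀ j k, φ j (v k) = if j = k then 1 else 0) {y : M}
    (hy : y ∈ Submodule.span R (Set.range v)) :
    ∑ j, φ j y • v j = y := by
  obtain ⟨c, rfl⟩ := (Submodule.mem_span_range_iff_exists_fun R).mp hy
  simp [map_sum, hφv]

theorem LinearMap.ext_on_skewAdjoint {A M : Type*} [AddCommGroup A] [StarAddMonoid A]
    [Module ℂ A] [StarModule ℂ A] [AddCommGroup M] [Module ℂ M] {f g : A →ₗ[ℂ] M}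
    (h : ∀ a ∈ skewAdjoint A, f a = g a) : f = g := by
  have h_selfAdjoint (a : A) (ha : IsSelfAdjoint a) : f a = g a := by
    simpa using h _ (ha.I_smul_mem_skewAdjoint (K := ℂ))
  ext a
  rw [← realPart_add_I_smul_imaginaryPart a, map_add, map_add, map_smul, map_smul,
    h_selfAdjoint _ (ℜ a).prop, h_selfAdjoint _ (ℑ a).prop]

theorem Matrix.re_trace_conjTranspose_mul_of_skew {n : Type*} [Fintype n]
    {X Y : Matrix n n ℂ} (hX : Xᴴ = -X) (hY : Yᴴ = -Y) :
    (((Xᴴ * Y).trace.re : ℝ) : ℂ) = -(X * Y).trace := by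
  have h_real : star (X * Y).trace = (X * Y).trace := by
    rw [← trace_conjTranspose, conjTranspose_mul, hX, hY, neg_mul_neg, trace_mul_comm]
  rw [hX, neg_mul, trace_neg, Complex.neg_re, Complex.ofReal_neg,
    Complex.conj_eq_iff_re.mp h_real]

theorem Matrix.sum_mul_mul_eq_trace_smul_one {ι n R : Type*} [Fintype ι] [Fintype n]
    [DecidableEq n] [CommRing R] {X : ι → Matrix n n R} {c : R}
    (hX : ∀ Y, ∑ j, (X j * Y).trace • X j = c • Y) (A : Matrix n n R) :
    ∑ j, X j * A * X j = (c * A.trace) • 1 := by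
  have h_entry (a b p q : n) : ∑ j, X j a b * X j p q = if b = p ∧ a = q then c else 0 := by
    simpa [trace_mul_single, sum_apply, single_apply] using
      congrFun (congrFun (hX (single b a 1)) p) q
  ext p q
  calc (∑ j, X j * A * X j) p q
      = ∑ s, ∑ r, A r s * ∑ j, X j p r * X j s q := by
        simp only [sum_apply, mul_apply, Finset.sum_mul, Finset.mul_sum]
        rw [Finset.sum_comm]
        refine Finset.sum_congr rfl fun s _ => Finset.sum_comm.trans ?_
        exact Finset.sum_congr rfl fun r _ => Finset.sum_congr rfl fun j _ => by ring
    _ = ((c * A.trace) • (1 : Matrix n n R)) p q := by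
        by_cases hpq : p = q <;> simp [h_entry, trace, Finset.mul_sum, hpq, mul_comm]

theorem Matrix.smul_sum_trace_mul_smul_eq_neg {ι n : Type*} [Fintype ι] [DecidableEq ι]
    [Fintype n] {X : ι → Matrix n n ℂ} {c : ℝ} (hskew : ∀ j, (X j)ᴴ = -X j)
    (horth : ∀ j k, c * ((X j)ᴴ * X k).trace.re = if j = k then 1 else 0)
    (hspan : ∀ Y : Matrix n n ℂ, Yᴴ = -Y → Y ∈ Submodule.span ℝ (Set.range X))
    (Y : Matrix n n ℂ) :
    (c : ℂ) • ∑ j, (X j * Y).trace • X j = -Y := by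
  let f : Matrix n n ℂ →ₗ[ℂ] Matrix n n ℂ :=
    (c : ℂ) • ∑ j, (traceLinearMap n ℂ ℂ ∘ₗ LinearMap.mulLeft ℂ (X j)).smulRight (X j)
  suffices f = -LinearMap.id by simpa [f] using LinearMap.congr_fun this Y
  refine LinearMap.ext_on_skewAdjoint fun Y hY => ?_
  rw [skewAdjoint.mem_iff, star_eq_conjTranspose] at hY
  let φ (j : ι) : Matrix n n ℂ →ₗ[ℝ] ℝ :=
    c • (Complex.reLm ∘ₗ traceLinearMap n ℝ ℂ ∘ₗ LinearMap.mulLeft ℝ (X j)ᴴ)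
  have h_expand : ∑ j, φ j Y • X j = Y :=
    Submodule.sum_apply_smul_eq_of_mem_span (by simpa [φ] using horth) (hspan Y hY)
  have h_coeff (j : ι) : ((φ j Y : ℝ) : ℂ) = -(c * (X j * Y).trace) := by
    simp [φ, re_trace_conjTranspose_mul_of_skew (hskew j) hY]
  calc f Y = ∑ j, (c * (X j * Y).trace) • X j := by
          simp [f, Finset.smul_sum, smul_smul, -Complex.coe_smul]
    _ = -∑ j, φ j Y • X j := by simp [← Complex.coe_smul, h_coeff]
    _ = -LinearMap.id Y := by rw [h_expand, LinearMap.id_apply]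

/-- If `X₁, …, X_{N²}` is an orthonormal basis of the real vector space of `N × N`
skew-Hermitian matrices with respect to the inner product `⟨X,Y⟩ = N·Re(trace(XᴴY))`, then
`∑ⱼ Xⱼ A Xⱼ = −tr(A)·I` for every `A ∈ M_N(ℂ)`, where `tr` is the normalized trace. -/
theorem sum_skewHermitian_conjugation {N : ℕ}
    (X : Fin (N ^ 2) → Matrix (Fin N) (Fin N) ℂ)
    (hskew : ∀ j, (X j)ᴴ = -(X j))
    (horth : ∀ j k, (N : ℝ) * ((X j)ᴴ * X k).trace.re = if j = k then 1 else 0)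
    (hspan : ∀ A : Matrix (Fin N) (Fin N) ℂ, Aᴴ = -A →
      A ∈ Submodule.span ℝ (Set.range X)) :
    ∀ A : Matrix (Fin N) (Fin N) ℂ,
      ∑ j, X j * A * X j = (-((N : ℂ)⁻¹ * A.trace)) • (1 : Matrix (Fin N) (Fin N) ℂ) := by
  intro A
  rcases N.eq_zero_or_pos with rfl | hN
  · exact Subsingleton.elim _ _
  have h_completeness (Y : Matrix (Fin N) (Fin N) ℂ) :
      ∑ j, (X j * Y).trace • X j = (-(N : ℂ)⁻¹) • Y := by
    have h := smul_sum_trace_mul_smul_eq_neg hskew horth hspan Y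
    rw [Complex.ofReal_natCast] at h
    rw [neg_smul, ← smul_neg, ← h, inv_smul_smul₀ (Nat.cast_ne_zero.mpr hN.ne')]
  rw [sum_mul_mul_eq_trace_smul_one h_completeness, neg_mul]
end

section
/- Let U ⊆ ℝⁿ be open and let H: U × ℝⁿ → ℝ be smooth. Let S: [0,∞) × U → ℝ be smooth and satisfy the Hamilton–Jacobi equation ∂S/∂t (t,x) = −H(x, ∇_x S(t,x)) for all x ∈ U and t ≥ 0. Suppose (x(t), p(t)) is a curve in U × ℝⁿ defined for t in [0,T], satisfying Hamilton's equations dx_j/dt = ∂H/∂p_j(x(t),p(t)) and dp_j/dt = −∂H/∂x_j(x(t),p(t)), with initial conditions x(0) = x₀ ∈ U and p(0) = p₀ := (∇_x S)(0, x₀). Then for all t ∈ [0,T]: (i) S(t, x(t)) = S(0, x₀) − H(x₀, p₀)·t + ∫₀ᵗ p(s)·(dx/ds)(s) ds, and (ii) (∇_x S)(t, x(t)) = p(t). -/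
open Set Filter Topology ContinuousLinearMap
open scoped RealInnerProductSpace

noncomputable section HJAux
variable {n : ℕ}
local notation "E" => EuclideanSpace ℝ (Fin n)

def phi1 (n : ℕ) : ((E × E) →L[ℝ] ℝ) →L[ℝ] E :=
  ((InnerProductSpace.toDual ℝ E).symm.toContinuousLinearEquiv.toContinuousLinearMap).comp
    ((compL ℝ E (E × E) ℝ).flip (inl ℝ E E))

def phi2 (n : ℕ) : ((E × E) →L[ℝ] ℝ) →L[ℝ] E :=
  ((InnerProductSpace.toDual ℝ E).symm.toContinuousLinearEquiv.toContinuousLinearMap).comp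
    ((compL ℝ E (E × E) ℝ).flip (inr ℝ E E))

lemma inner_phi1 (ℓ : (E × E) →L[ℝ] ℝ) (w : E) : ⟪phi1 n ℓ, w⟫ = ℓ (w, 0) := by
  simp [phi1, InnerProductSpace.toDual_symm_apply]

lemma inner_phi2 (ℓ : (E × E) →L[ℝ] ℝ) (w : E) : ⟪phi2 n ℓ, w⟫ = ℓ (0, w) := by
  simp [phi2, InnerProductSpace.toDual_symm_apply]

lemma norm_phi1_le (ℓ : (E × E) →L[ℝ] ℝ) : ‖phi1 n ℓ‖ ≤ ‖ℓ‖ := by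
  have h1 : ‖phi1 n ℓ‖ = ‖ℓ.comp (inl ℝ E E)‖ := by
    rw [phi1]
    simp only [ContinuousLinearMap.coe_comp', Function.comp_apply,
      ContinuousLinearEquiv.coe_coe, LinearIsometryEquiv.coe_toContinuousLinearEquiv]
    rw [LinearIsometryEquiv.norm_map]
    rfl
  rw [h1]
  refine ContinuousLinearMap.opNorm_le_bound _ (norm_nonneg ℓ) (fun w => ?_)
  have := ℓ.le_opNorm ((w, 0) : E × E)
  simpa [Prod.norm_def] using this

lemma norm_phi2_le (ℓ : (E × E) →L[ℝ] ℝ) : ‖phi2 n ℓ‖ ≤ ‖ℓ‖ := by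
  have h1 : ‖phi2 n ℓ‖ = ‖ℓ.comp (inr ℝ E E)‖ := by
    rw [phi2]
    simp only [ContinuousLinearMap.coe_comp', Function.comp_apply,
      ContinuousLinearEquiv.coe_coe, LinearIsometryEquiv.coe_toContinuousLinearEquiv]
    rw [LinearIsometryEquiv.norm_map]
    rfl
  rw [h1]
  refine ContinuousLinearMap.opNorm_le_bound _ (norm_nonneg ℓ) (fun w => ?_)
  have := ℓ.le_opNorm ((0, w) : E × E)
  simpa [Prod.norm_def] using this

section Hside
variable {U : Set (EuclideanSpace ℝ (Fin n))} (hU : IsOpen U) {H : EuclideanSpace ℝ (Fin n) → EuclideanSpace ℝ (Fin n) → ℝ}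
  (hH : ContDiffOn ℝ (⊤ : ℕ∞) (fun q : EuclideanSpace ℝ (Fin n) × EuclideanSpace ℝ (Fin n) => H q.1 q.2) (U ×ˢ univ))

include hU hH

lemma H_hasFDerivAt {a b : E} (ha : a ∈ U) :
    HasFDerivAt (fun q : E × E => H q.1 q.2)
      (fderiv ℝ (fun q : E × E => H q.1 q.2) (a, b)) (a, b) := by
  have h1 : IsOpen (U ×ˢ (univ : Set E)) := hU.prod isOpen_univ
  have := (hH.contDiffAt (h1.mem_nhds (show (a,b) ∈ U ×ˢ (univ : Set E) from ⟨ha, trivial⟩))).differentiableAt (by simp)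
  exact this.hasFDerivAt

/-- the slice `y ↦ H y b` has gradient `phi1 (DH (a,b))` at `a`. -/
lemma gradX_eq {a b : E} (ha : a ∈ U) :
    HasGradientAt (fun y => H y b) (phi1 n (fderiv ℝ (fun q : E × E => H q.1 q.2) (a, b))) a := by
  have h := (H_hasFDerivAt hU hH ha (b := b)).comp a
    ((hasFDerivAt_id (𝕜 := ℝ) a).prodMk (hasFDerivAt_const b a))
  rw [hasGradientAt_iff_hasFDerivAt]
  refine h.congr_fderiv (Eq.symm ?_)
  apply ContinuousLinearMap.ext; intro w
  have : ⟪phi1 n (fderiv ℝ (fun q : E × E => H q.1 q.2) (a, b)), w⟫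
      = (fderiv ℝ (fun q : E × E => H q.1 q.2) (a, b)) (w, 0) := inner_phi1 _ _
  simpa [InnerProductSpace.toDual_apply_apply, real_inner_comm] using this

lemma gradX_val {a b : E} (ha : a ∈ U) :
    gradient (fun y => H y b) a = phi1 n (fderiv ℝ (fun q : E × E => H q.1 q.2) (a, b)) :=
  (gradX_eq hU hH ha).gradient

lemma gradP_eq {a b : E} (ha : a ∈ U) :
    HasGradientAt (fun q => H a q) (phi2 n (fderiv ℝ (fun q : E × E => H q.1 q.2) (a, b))) b := by
  have h := (H_hasFDerivAt hU hH ha (b := b)).comp b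
    ((hasFDerivAt_const a b).prodMk (hasFDerivAt_id b))
  rw [hasGradientAt_iff_hasFDerivAt]
  refine h.congr_fderiv (Eq.symm ?_)
  apply ContinuousLinearMap.ext; intro w
  have : ⟪phi2 n (fderiv ℝ (fun q : E × E => H q.1 q.2) (a, b)), w⟫
      = (fderiv ℝ (fun q : E × E => H q.1 q.2) (a, b)) (0, w) := inner_phi2 _ _
  simpa [InnerProductSpace.toDual_apply_apply, real_inner_comm] using this

lemma gradP_val {a b : E} (ha : a ∈ U) :
    gradient (fun q => H a q) b = phi2 n (fderiv ℝ (fun q : E × E => H q.1 q.2) (a, b)) :=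
  (gradP_eq hU hH ha).gradient

end Hside


def phiT (n : ℕ) : ((ℝ × E) →L[ℝ] ℝ) →L[ℝ] E :=
  ((InnerProductSpace.toDual ℝ E).symm.toContinuousLinearEquiv.toContinuousLinearMap).comp
    ((compL ℝ E (ℝ × E) ℝ).flip (inr ℝ ℝ E))

lemma inner_phiT (ℓ : (ℝ × E) →L[ℝ] ℝ) (w : E) : ⟪phiT n ℓ, w⟫ = ℓ (0, w) := by
  simp [phiT, InnerProductSpace.toDual_symm_apply]

section Sside
variable {U : Set (EuclideanSpace ℝ (Fin n))} {S : ℝ → EuclideanSpace ℝ (Fin n) → ℝ}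

def Om (U : Set E) : Set (ℝ × E) := Ici 0 ×ˢ U

def Lmap (S : ℝ → E → ℝ) (U : Set E) : ℝ × E → ((ℝ × E) →L[ℝ] ℝ) :=
  fderivWithin ℝ (fun q : ℝ × E => S q.1 q.2) (Om U)

def Mmap (S : ℝ → E → ℝ) (U : Set E) : ℝ × E → ((ℝ × E) →L[ℝ] ((ℝ × E) →L[ℝ] ℝ)) :=
  fderivWithin ℝ (Lmap S U) (Om U)

def Gvec (S : ℝ → E → ℝ) (U : Set E) : ℝ × E → E := fun q => phiT n (Lmap S U q)

def Amap (S : ℝ → E → ℝ) (U : Set E) (q : ℝ × E) : E →L[ℝ] E :=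
  (phiT n).comp ((Mmap S U q).comp (inr ℝ ℝ E))

lemma omU (hU : IsOpen U) : UniqueDiffOn ℝ (Om U) :=
  (uniqueDiffOn_Ici 0).prod hU.uniqueDiffOn

lemma omCl (hU : IsOpen U) {q : ℝ × E} (hq : q ∈ Om U) :
    q ∈ closure (interior (Om U)) := by
  have h2 : interior (Om U) = Ioi 0 ×ˢ U := by
    rw [Om, interior_prod_eq, interior_Ici, hU.interior_eq]
  rw [h2, closure_prod_eq]
  exact ⟨by rw [closure_Ioi]; exact hq.1, subset_closure hq.2⟩

variable (hU : IsOpen U)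
  (hS : ContDiffOn ℝ (⊤ : ℕ∞) (fun q : ℝ × EuclideanSpace ℝ (Fin n) => S q.1 q.2) (Ici 0 ×ˢ U))

include hS in
lemma hL {q : ℝ × E} (hq : q ∈ Om U) :
    HasFDerivWithinAt (fun q : ℝ × E => S q.1 q.2) (Lmap S U q) (Om U) q :=
  ((hS.differentiableOn (by simp)) q hq).hasFDerivWithinAt

include hS hU in
lemma hLsmooth : ContDiffOn ℝ 2 (Lmap S U) (Om U) :=
  (hS.of_le (by norm_cast) : ContDiffOn ℝ 3 _ _).fderivWithin (omU hU) (by norm_num)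

include hS hU in
lemma hM {q : ℝ × E} (hq : q ∈ Om U) :
    HasFDerivWithinAt (Lmap S U) (Mmap S U q) (Om U) q :=
  (((hLsmooth hU hS).differentiableOn (by norm_num)) q hq).hasFDerivWithinAt

include hS hU in
lemma hMcont : ContinuousOn (Mmap S U) (Om U) :=
  ((hLsmooth hU hS).fderivWithin (omU hU) (by norm_num) : ContDiffOn ℝ 1 _ _).continuousOn

include hS hU in
lemma hGgrad {q : ℝ × E} (hq : q ∈ Om U) :
    HasGradientAt (S q.1) (Gvec S U q) q.2 := by
  have hj : HasFDerivAt (fun y : E => ((q.1, y) : ℝ × E)) (inr ℝ ℝ E) q.2 :=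
    (hasFDerivAt_const q.1 q.2).prodMk (hasFDerivAt_id q.2)
  have hmap : MapsTo (fun y : E => ((q.1, y) : ℝ × E)) U (Om U) :=
    fun y hy => ⟨hq.1, hy⟩
  have hcomp := ((hL hS hq).comp q.2 hj.hasFDerivWithinAt hmap).hasFDerivAt
    (hU.mem_nhds hq.2)
  rw [hasGradientAt_iff_hasFDerivAt]
  refine hcomp.congr_fderiv (Eq.symm ?_)
  simp [Gvec, phiT]

include hS hU in
lemma hGval {q : ℝ × E} (hq : q ∈ Om U) :
    gradient (S q.1) q.2 = Gvec S U q := (hGgrad hU hS hq).gradient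

include hS hU in
lemma hG' {q : ℝ × E} (hq : q ∈ Om U) :
    HasFDerivWithinAt (Gvec S U) ((phiT n).comp (Mmap S U q)) (Om U) q :=
  (phiT n).hasFDerivAt.comp_hasFDerivWithinAt q (hM hU hS hq)

include hS hU in
lemma hGcont : ContinuousOn (Gvec S U) (Om U) :=
  (phiT n).continuous.comp_continuousOn ((hLsmooth hU hS).continuousOn)

include hS hU in
lemma hSym {q : ℝ × E} (hq : q ∈ Om U) (v w : ℝ × E) :
    Mmap S U q v w = Mmap S U q w v := by
  have := (hS q hq).isSymmSndFDerivWithinAt (by rw [minSmoothness_of_isRCLikeNormedField]; norm_cast) (omU hU) (omCl hU hq) hq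
  exact this v w

end Sside

section Combined
variable {U : Set (EuclideanSpace ℝ (Fin n))} {S : ℝ → EuclideanSpace ℝ (Fin n) → ℝ}
  {H : EuclideanSpace ℝ (Fin n) → EuclideanSpace ℝ (Fin n) → ℝ}
variable (hU : IsOpen U)
  (hH : ContDiffOn ℝ (⊤ : ℕ∞) (fun q : EuclideanSpace ℝ (Fin n) × EuclideanSpace ℝ (Fin n) => H q.1 q.2) (U ×ˢ univ))
  (hS : ContDiffOn ℝ (⊤ : ℕ∞) (fun q : ℝ × EuclideanSpace ℝ (Fin n) => S q.1 q.2) (Ici 0 ×ˢ U))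
  (hPDE : ∀ t ≥ (0 : ℝ), ∀ y ∈ U,
      HasDerivAt (fun s : ℝ => S s y) (-(H y (gradient (S t) y))) t)

include hU hS hPDE in
lemma hPDE' {q : ℝ × E} (hq : q ∈ Om U) :
    Lmap S U q ((1:ℝ), (0:E)) = -(H q.2 (Gvec S U q)) := by
  have hc : HasDerivAt (fun t : ℝ => ((t, q.2) : ℝ × E)) ((1:ℝ), (0:E)) q.1 :=
    (hasDerivAt_id q.1).prodMk (hasDerivAt_const q.1 q.2)
  have h1 : HasDerivWithinAt (fun t : ℝ => S t q.2) (Lmap S U q ((1:ℝ),(0:E))) (Ici 0) q.1 :=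
    (hL hS hq).comp_hasDerivWithinAt_of_eq q.1 hc.hasDerivWithinAt
      (fun t ht => ⟨ht, hq.2⟩) (by simp)
  have h2 := ((hPDE q.1 hq.1 q.2 hq.2).hasDerivWithinAt (s := Ici 0))
  rw [hGval hU hS hq] at h2
  have hu := (uniqueDiffOn_Ici (0:ℝ)) q.1 hq.1
  rw [← h1.derivWithin hu, h2.derivWithin hu]

include hU hH hS hPDE in
lemma hDiffPDE {q : ℝ × E} (hq : q ∈ Om U) (w : E) :
    Mmap S U q ((0:ℝ), w) ((1:ℝ), (0:E)) =
      -(fderiv ℝ (fun r : E × E => H r.1 r.2) (q.2, Gvec S U q)) (w, Amap S U q w) := by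
  have hj : HasFDerivAt (fun y : E => ((q.1, y) : ℝ × E)) (inr ℝ ℝ E) q.2 :=
    (hasFDerivAt_const q.1 q.2).prodMk (hasFDerivAt_id q.2)
  have hmap : MapsTo (fun y : E => ((q.1, y) : ℝ × E)) U (Om U) := fun y hy => ⟨hq.1, hy⟩
  have hLy : HasFDerivAt (fun y : E => Lmap S U (q.1, y)) ((Mmap S U q).comp (inr ℝ ℝ E)) q.2 := by
    have h := HasFDerivWithinAt.comp (t := Om U) q.2 (hM hU hS hq) hj.hasFDerivWithinAt hmap
    exact h.hasFDerivAt (hU.mem_nhds hq.2)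
  have hd1 : HasFDerivAt (fun y : E => Lmap S U (q.1, y) ((1:ℝ), (0:E)))
      ((ContinuousLinearMap.apply ℝ ℝ (((1:ℝ), (0:E)) : ℝ × E)).comp
        ((Mmap S U q).comp (inr ℝ ℝ E))) q.2 :=
    (ContinuousLinearMap.apply ℝ ℝ (((1:ℝ), (0:E)) : ℝ × E)).hasFDerivAt.comp q.2 hLy
  have hGy : HasFDerivAt (fun y : E => Gvec S U (q.1, y)) (Amap S U q) q.2 :=
    (phiT n).hasFDerivAt.comp q.2 hLy
  have hk : HasFDerivAt (fun y : E => ((y, Gvec S U (q.1, y)) : E × E))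
      ((ContinuousLinearMap.id ℝ E).prod (Amap S U q)) q.2 :=
    (hasFDerivAt_id q.2).prodMk hGy
  have hH2 := H_hasFDerivAt hU hH (a := q.2) (b := Gvec S U q) hq.2
  have hd2 : HasFDerivAt (fun y : E => -(H y (Gvec S U (q.1, y))))
      (-((fderiv ℝ (fun r : E × E => H r.1 r.2) (q.2, Gvec S U q)).comp
        ((ContinuousLinearMap.id ℝ E).prod (Amap S U q)))) q.2 := (hH2.comp q.2 hk).neg
  have heq : (fun y : E => Lmap S U (q.1, y) ((1:ℝ), (0:E)))
      =ᶠ[𝓝 q.2] (fun y : E => -(H y (Gvec S U (q.1, y)))) := by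
    filter_upwards [hU.mem_nhds hq.2] with y hy
    exact hPDE' hU hS hPDE (show ((q.1, y) : ℝ × E) ∈ Om U from ⟨hq.1, hy⟩)
  have hd1' : HasFDerivAt (fun y : E => Lmap S U (q.1, y) ((1:ℝ), (0:E)))
      (-((fderiv ℝ (fun r : E × E => H r.1 r.2) (q.2, Gvec S U q)).comp
        ((ContinuousLinearMap.id ℝ E).prod (Amap S U q)))) q.2 :=
    hd2.congr_of_eventuallyEq heq
  have huniq := hd1.unique hd1'
  have := congrArg (fun (L : E →L[ℝ] ℝ) => L w) huniq
  simpa using this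

include hU hH hS hPDE in
lemma hTpart {q : ℝ × E} (hq : q ∈ Om U) :
    phiT n (Mmap S U q ((1:ℝ), (0:E))) =
      -(phi1 n (fderiv ℝ (fun r : E × E => H r.1 r.2) (q.2, Gvec S U q)))
      - Amap S U q (phi2 n (fderiv ℝ (fun r : E × E => H r.1 r.2) (q.2, Gvec S U q))) := by
  apply ext_inner_right ℝ
  intro w
  set ℓ := fderiv ℝ (fun r : E × E => H r.1 r.2) (q.2, Gvec S U q) with hℓ
  have hA : ∀ u : E, Amap S U q u = phiT n (Mmap S U q ((0:ℝ), u)) := fun u => rfl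
  have lhs : ⟪phiT n (Mmap S U q ((1:ℝ), (0:E))), w⟫ = -(ℓ (w, Amap S U q w)) := by
    rw [inner_phiT, hSym hU hS hq ((1:ℝ),(0:E)) ((0:ℝ),w), hDiffPDE hU hH hS hPDE hq w]
  rw [lhs, inner_sub_left, inner_neg_left, inner_phi1]
  have h2 : ⟪Amap S U q (phi2 n ℓ), w⟫ = ℓ (0, Amap S U q w) := by
    rw [hA, inner_phiT, hSym hU hS hq ((0:ℝ), phi2 n ℓ) ((0:ℝ), w)]
    have : Mmap S U q ((0:ℝ), w) ((0:ℝ), phi2 n ℓ) = ⟪phiT n (Mmap S U q ((0:ℝ), w)), phi2 n ℓ⟫ :=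
      (inner_phiT _ _).symm
    rw [this, ← hA, real_inner_comm, inner_phi2]
  rw [h2]
  have : ((w, Amap S U q w) : E × E) = ((w,0) : E × E) + ((0 : E), Amap S U q w) := by simp
  rw [this, map_add]; ring

end Combined

end HJAux

set_option maxHeartbeats 2000000 in
/-- **The Hamilton–Jacobi method.**  Suppose `S` satisfies the Hamilton–Jacobi equation
`∂S/∂t = −H(x, ∇ₓS)` on `[0,∞) × U` and `(x(t), p(t))` solves Hamilton's equations
`dx/dt = ∇_p H`, `dp/dt = −∇ₓ H` with `x(0) = x₀` and `p(0) = p₀ = (∇ₓS)(0, x₀)`.  Then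
`S(t, x(t)) = S(0,x₀) − H(x₀,p₀)·t + ∫₀ᵗ p(s)·(dx/ds)(s) ds` and `(∇ₓS)(t, x(t)) = p(t)`. -/
theorem hamilton_jacobi_method {n : ℕ}
    (U : Set (EuclideanSpace ℝ (Fin n))) (hU : IsOpen U)
    (H : EuclideanSpace ℝ (Fin n) → EuclideanSpace ℝ (Fin n) → ℝ)
    (hH : ContDiffOn ℝ (⊤ : ℕ∞) (fun q : EuclideanSpace ℝ (Fin n) × EuclideanSpace ℝ (Fin n) =>
      H q.1 q.2) (U ×ˢ univ))
    (S : ℝ → EuclideanSpace ℝ (Fin n) → ℝ)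
    (hS : ContDiffOn ℝ (⊤ : ℕ∞) (fun q : ℝ × EuclideanSpace ℝ (Fin n) => S q.1 q.2) (Ici 0 ×ˢ U))
    (hPDE : ∀ t ≥ (0 : ℝ), ∀ y ∈ U,
      HasDerivAt (fun s : ℝ => S s y) (-(H y (gradient (S t) y))) t)
    (T : ℝ) (hT : 0 ≤ T)
    (x p : ℝ → EuclideanSpace ℝ (Fin n))
    (hxU : ∀ t ∈ Icc 0 T, x t ∈ U)
    (hx : ∀ t ∈ Icc 0 T, HasDerivAt x (gradient (fun q => H (x t) q) (p t)) t)
    (hp : ∀ t ∈ Icc 0 T, HasDerivAt p (-(gradient (fun y => H y (p t)) (x t))) t)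
    (x₀ p₀ : EuclideanSpace ℝ (Fin n))
    (hx0 : x 0 = x₀) (hp0 : p 0 = p₀) (hp0' : p₀ = gradient (S 0) x₀) :
    ∀ t ∈ Icc 0 T,
      S t (x t) = S 0 x₀ - H x₀ p₀ * t + ∫ s in (0 : ℝ)..t, ⟪p s, deriv x s⟫ ∧
      gradient (S t) (x t) = p t := by
  classical
  have h1 : IsOpen (U ×ˢ (univ : Set (EuclideanSpace ℝ (Fin n)))) := hU.prod isOpen_univ
  have hmem : ∀ t ∈ Icc 0 T, ((t, x t) : ℝ × EuclideanSpace ℝ (Fin n)) ∈ Om U :=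
    fun t ht => ⟨ht.1, hxU t ht⟩
  have xc : ContinuousOn x (Icc 0 T) := fun t ht => ((hx t ht).continuousAt).continuousWithinAt
  have pc : ContinuousOn p (Icc 0 T) := fun t ht => ((hp t ht).continuousAt).continuousWithinAt
  -- the candidate momentum along the flow
  have rcont : ContinuousOn (fun t => Gvec S U (t, x t)) (Icc 0 T) :=
    (hGcont hU hS).comp (continuousOn_id.prodMk xc) (fun t ht => hmem t ht)
  -- (ii) via uniqueness of ODE solutions
  have key2 : ∀ t ∈ Icc 0 T, Gvec S U (t, x t) = p t := by
    obtain ⟨R1, hR1⟩ := isCompact_Icc.exists_bound_of_continuousOn rcont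
    obtain ⟨R2, hR2⟩ := isCompact_Icc.exists_bound_of_continuousOn pc
    set R := max R1 R2 with hRdef
    have hRr : ∀ t ∈ Icc 0 T, Gvec S U (t, x t)
        ∈ Metric.closedBall (0 : EuclideanSpace ℝ (Fin n)) R := by
      intro t ht
      rw [Metric.mem_closedBall, dist_zero_right]
      exact le_trans (hR1 t ht) (le_max_left _ _)
    have hRp : ∀ t ∈ Icc 0 T, p t ∈ Metric.closedBall (0 : EuclideanSpace ℝ (Fin n)) R := by
      intro t ht
      rw [Metric.mem_closedBall, dist_zero_right]
      exact le_trans (hR2 t ht) (le_max_right _ _)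
    have hKx : IsCompact (x '' Icc 0 T) := isCompact_Icc.image_of_continuousOn xc
    have hQ : IsCompact ((x '' Icc 0 T) ×ˢ
        Metric.closedBall (0 : EuclideanSpace ℝ (Fin n)) R) :=
      hKx.prod (isCompact_closedBall _ _)
    have hQsub : ((x '' Icc 0 T) ×ˢ Metric.closedBall (0 : EuclideanSpace ℝ (Fin n)) R)
        ⊆ U ×ˢ univ := by
      rintro ⟨a, b⟩ ⟨ha, -⟩
      obtain ⟨u, hu, hxu⟩ := ha
      exact ⟨hxu ▸ hxU u hu, trivial⟩
    have hDH1 : ContDiffOn ℝ 1 (fderiv ℝ (fun r : EuclideanSpace ℝ (Fin n) ×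
        EuclideanSpace ℝ (Fin n) => H r.1 r.2)) (U ×ˢ univ) :=
      (hH.of_le (by norm_cast) : ContDiffOn ℝ 2 _ _).fderiv_of_isOpen h1 (by norm_num)
    have hD2Hc : ContinuousOn (fderiv ℝ (fderiv ℝ (fun r : EuclideanSpace ℝ (Fin n) ×
        EuclideanSpace ℝ (Fin n) => H r.1 r.2))) (U ×ˢ univ) :=
      hDH1.continuousOn_fderiv_of_isOpen h1 le_rfl
    obtain ⟨C2, hC2⟩ := hQ.exists_bound_of_continuousOn (f := fderiv ℝ (fderiv ℝ (fun r : EuclideanSpace ℝ (Fin n) ×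
        EuclideanSpace ℝ (Fin n) => H r.1 r.2))) (hD2Hc.mono hQsub)
    have hmem0 : ((x 0, p 0) : EuclideanSpace ℝ (Fin n) × EuclideanSpace ℝ (Fin n))
        ∈ (x '' Icc 0 T) ×ˢ Metric.closedBall (0 : EuclideanSpace ℝ (Fin n)) R :=
      ⟨mem_image_of_mem x ⟨le_rfl, hT⟩, hRp 0 ⟨le_rfl, hT⟩⟩
    have hC2nn : 0 ≤ C2 := le_trans (norm_nonneg _) (hC2 _ hmem0)
    have hAcont : ContinuousOn (fun t => Amap S U (t, x t)) (Icc 0 T) := by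
      have m1 : ContinuousOn (fun q : ℝ × EuclideanSpace ℝ (Fin n) =>
          (Mmap S U q).comp (inr ℝ ℝ (EuclideanSpace ℝ (Fin n)))) (Om U) :=
        (hMcont hU hS).clm_comp continuousOn_const
      have m2 : ContinuousOn (fun q : ℝ × EuclideanSpace ℝ (Fin n) => Amap S U q) (Om U) :=
        continuousOn_const.clm_comp m1
      exact m2.comp (continuousOn_id.prodMk xc) (fun t ht => hmem t ht)
    obtain ⟨CA, hCA⟩ := isCompact_Icc.exists_bound_of_continuousOn hAcont
    have hCAnn : 0 ≤ CA := le_trans (norm_nonneg _) (hCA 0 ⟨le_rfl, hT⟩)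
    set v : ℝ → EuclideanSpace ℝ (Fin n) → EuclideanSpace ℝ (Fin n) := fun τ z =>
      -(phi1 n (fderiv ℝ (fun r : EuclideanSpace ℝ (Fin n) ×
          EuclideanSpace ℝ (Fin n) => H r.1 r.2) (x τ, z)))
      - Amap S U (τ, x τ) (phi2 n (fderiv ℝ (fun r : EuclideanSpace ℝ (Fin n) ×
          EuclideanSpace ℝ (Fin n) => H r.1 r.2) (x τ, z)))
      + Amap S U (τ, x τ) (gradient (fun q => H (x τ) q) (p τ)) with hvdef
    -- uniform Lipschitz bound for DH slices on the ball
    have hSL : ∀ τ ∈ Icc 0 T, ∀ z₁ ∈ Metric.closedBall (0 : EuclideanSpace ℝ (Fin n)) R,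
        ∀ z₂ ∈ Metric.closedBall (0 : EuclideanSpace ℝ (Fin n)) R,
        ‖fderiv ℝ (fun r : EuclideanSpace ℝ (Fin n) ×
            EuclideanSpace ℝ (Fin n) => H r.1 r.2) (x τ, z₁)
          - fderiv ℝ (fun r : EuclideanSpace ℝ (Fin n) ×
            EuclideanSpace ℝ (Fin n) => H r.1 r.2) (x τ, z₂)‖ ≤ C2 * ‖z₁ - z₂‖ := by
      intro τ hτ
      have hder : ∀ z ∈ Metric.closedBall (0 : EuclideanSpace ℝ (Fin n)) R,
          HasFDerivWithinAt (fun z => fderiv ℝ (fun r : EuclideanSpace ℝ (Fin n) ×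
              EuclideanSpace ℝ (Fin n) => H r.1 r.2) (x τ, z))
            ((fderiv ℝ (fderiv ℝ (fun r : EuclideanSpace ℝ (Fin n) ×
              EuclideanSpace ℝ (Fin n) => H r.1 r.2)) (x τ, z)).comp
                (inr ℝ (EuclideanSpace ℝ (Fin n)) (EuclideanSpace ℝ (Fin n))))
            (Metric.closedBall (0 : EuclideanSpace ℝ (Fin n)) R) z := by
        intro z hz
        have hopen : ((x τ, z) : EuclideanSpace ℝ (Fin n) × EuclideanSpace ℝ (Fin n))
            ∈ U ×ˢ univ := ⟨hxU τ hτ, trivial⟩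
        have hdiff := ((hDH1.contDiffAt (h1.mem_nhds hopen)).differentiableAt
          (by norm_num)).hasFDerivAt
        have hj : HasFDerivAt (fun z : EuclideanSpace ℝ (Fin n) =>
            ((x τ, z) : EuclideanSpace ℝ (Fin n) × EuclideanSpace ℝ (Fin n)))
            (inr ℝ (EuclideanSpace ℝ (Fin n)) (EuclideanSpace ℝ (Fin n))) z :=
          (hasFDerivAt_const _ _).prodMk (hasFDerivAt_id _)
        exact (hdiff.comp z hj).hasFDerivWithinAt
      have hbound : ∀ z ∈ Metric.closedBall (0 : EuclideanSpace ℝ (Fin n)) R,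
          ‖(fderiv ℝ (fderiv ℝ (fun r : EuclideanSpace ℝ (Fin n) ×
              EuclideanSpace ℝ (Fin n) => H r.1 r.2)) (x τ, z)).comp
                (inr ℝ (EuclideanSpace ℝ (Fin n)) (EuclideanSpace ℝ (Fin n)))‖ ≤ C2 := by
        intro z hz
        refine ContinuousLinearMap.opNorm_le_bound _ hC2nn (fun w => ?_)
        have h1' := (fderiv ℝ (fderiv ℝ (fun r : EuclideanSpace ℝ (Fin n) ×
            EuclideanSpace ℝ (Fin n) => H r.1 r.2)) (x τ, z)).le_opNorm
          (((0 : EuclideanSpace ℝ (Fin n)), w))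
        have h2' : ‖(((0 : EuclideanSpace ℝ (Fin n)), w) :
            EuclideanSpace ℝ (Fin n) × EuclideanSpace ℝ (Fin n))‖ = ‖w‖ := by
          simp [Prod.norm_def]
        rw [h2'] at h1'
        refine le_trans h1' (mul_le_mul_of_nonneg_right ?_ (norm_nonneg w))
        exact hC2 _ ⟨mem_image_of_mem x hτ, hz⟩
      intro z₁ h₁ z₂ h₂
      exact (convex_closedBall _ _).norm_image_sub_le_of_norm_hasFDerivWithin_le
        hder hbound h₂ h₁
    set K : NNReal := Real.toNNReal ((1 + CA) * C2) with hKdef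
    have hvlip : ∀ τ, LipschitzOnWith K (v τ)
        (if τ ∈ Icc 0 T then Metric.closedBall (0 : EuclideanSpace ℝ (Fin n)) R else ∅) := by
      intro τ
      split_ifs with hτ
      · rw [lipschitzOnWith_iff_dist_le_mul]
        intro z₁ h₁ z₂ h₂
        rw [dist_eq_norm, dist_eq_norm]
        have hd : v τ z₁ - v τ z₂
            = -(phi1 n (fderiv ℝ (fun r : EuclideanSpace ℝ (Fin n) ×
                  EuclideanSpace ℝ (Fin n) => H r.1 r.2) (x τ, z₁)
                - fderiv ℝ (fun r : EuclideanSpace ℝ (Fin n) ×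
                  EuclideanSpace ℝ (Fin n) => H r.1 r.2) (x τ, z₂)))
              - Amap S U (τ, x τ) (phi2 n (fderiv ℝ (fun r : EuclideanSpace ℝ (Fin n) ×
                  EuclideanSpace ℝ (Fin n) => H r.1 r.2) (x τ, z₁)
                - fderiv ℝ (fun r : EuclideanSpace ℝ (Fin n) ×
                  EuclideanSpace ℝ (Fin n) => H r.1 r.2) (x τ, z₂))) := by
          simp only [hvdef, map_sub]
          abel
        rw [hd]
        have hδ := hSL τ hτ z₁ h₁ z₂ h₂
        have e1 : ‖phi1 n (fderiv ℝ (fun r : EuclideanSpace ℝ (Fin n) ×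
              EuclideanSpace ℝ (Fin n) => H r.1 r.2) (x τ, z₁)
            - fderiv ℝ (fun r : EuclideanSpace ℝ (Fin n) ×
              EuclideanSpace ℝ (Fin n) => H r.1 r.2) (x τ, z₂))‖ ≤ C2 * ‖z₁ - z₂‖ :=
          le_trans (norm_phi1_le _) hδ
        have e2 : ‖Amap S U (τ, x τ) (phi2 n (fderiv ℝ (fun r : EuclideanSpace ℝ (Fin n) ×
              EuclideanSpace ℝ (Fin n) => H r.1 r.2) (x τ, z₁)
            - fderiv ℝ (fun r : EuclideanSpace ℝ (Fin n) ×
              EuclideanSpace ℝ (Fin n) => H r.1 r.2) (x τ, z₂)))‖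
            ≤ CA * (C2 * ‖z₁ - z₂‖) := by
          refine le_trans ((Amap S U (τ, x τ)).le_opNorm _) ?_
          exact mul_le_mul (hCA τ hτ) (le_trans (norm_phi2_le _) hδ)
            (norm_nonneg _) hCAnn
        have e3 : ‖-(phi1 n (fderiv ℝ (fun r : EuclideanSpace ℝ (Fin n) ×
              EuclideanSpace ℝ (Fin n) => H r.1 r.2) (x τ, z₁)
            - fderiv ℝ (fun r : EuclideanSpace ℝ (Fin n) ×
              EuclideanSpace ℝ (Fin n) => H r.1 r.2) (x τ, z₂)))
            - Amap S U (τ, x τ) (phi2 n (fderiv ℝ (fun r : EuclideanSpace ℝ (Fin n) ×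
              EuclideanSpace ℝ (Fin n) => H r.1 r.2) (x τ, z₁)
            - fderiv ℝ (fun r : EuclideanSpace ℝ (Fin n) ×
              EuclideanSpace ℝ (Fin n) => H r.1 r.2) (x τ, z₂)))‖
            ≤ (1 + CA) * C2 * ‖z₁ - z₂‖ := by
          refine le_trans (norm_sub_le _ _) ?_
          rw [norm_neg]
          nlinarith [e1, e2, norm_nonneg (z₁ - z₂)]
        refine le_trans e3 ?_
        rw [← dist_eq_norm]
        refine mul_le_mul_of_nonneg_right ?_ dist_nonneg
        rw [hKdef, Real.coe_toNNReal']
        exact le_max_left _ _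
      · exact lipschitzOnWith_empty _ _
    have hr' : ∀ τ ∈ Ico 0 T, HasDerivWithinAt (fun u => Gvec S U (u, x u))
        (v τ (Gvec S U (τ, x τ))) (Ici τ) τ := by
      intro τ hτ
      have hτIcc : τ ∈ Icc 0 T := Ico_subset_Icc_self hτ
      have hq := hmem τ hτIcc
      have hc : HasDerivAt (fun u => ((u, x u) : ℝ × EuclideanSpace ℝ (Fin n)))
          (1, gradient (fun q => H (x τ) q) (p τ)) τ := (hasDerivAt_id τ).prodMk (hx τ hτIcc)
      have hmaps : MapsTo (fun u => ((u, x u) : ℝ × EuclideanSpace ℝ (Fin n)))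
          (Icc τ T) (Om U) := fun u hu => hmem u ⟨le_trans hτIcc.1 hu.1, hu.2⟩
      have hchain := (hG' hU hS hq).comp_hasDerivWithinAt τ hc.hasDerivWithinAt hmaps
      have hmemnhds : Icc τ T ∈ 𝓝[Ici τ] τ := by
        rw [← Ici_inter_Iic]
        exact inter_mem self_mem_nhdsWithin (mem_nhdsWithin_of_mem_nhds (Iic_mem_nhds hτ.2))
      have hchain' := hchain.mono_of_mem_nhdsWithin hmemnhds
      refine hchain'.congr_deriv (Eq.symm ?_)
      have hsplit : (((1:ℝ), gradient (fun q => H (x τ) q) (p τ)) :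
          ℝ × EuclideanSpace ℝ (Fin n))
          = ((1:ℝ), (0 : EuclideanSpace ℝ (Fin n)))
            + ((0:ℝ), gradient (fun q => H (x τ) q) (p τ)) := by simp
      rw [ContinuousLinearMap.comp_apply, hsplit, map_add, map_add,
        hTpart hU hH hS hPDE hq]
      rfl
    have hp' : ∀ τ ∈ Ico 0 T, HasDerivWithinAt p (v τ (p τ)) (Ici τ) τ := by
      intro τ hτ
      have hτIcc : τ ∈ Icc 0 T := Ico_subset_Icc_self hτ
      have hd := (hp τ hτIcc).hasDerivWithinAt (s := Ici τ)
      refine hd.congr_deriv (Eq.symm ?_)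
      simp only [hvdef]
      rw [gradP_val hU hH (hxU τ hτIcc), gradX_val hU hH (hxU τ hτIcc)]
      abel
    have h0eq : Gvec S U (0, x 0) = p 0 := by
      have h0T : (0:ℝ) ∈ Icc 0 T := ⟨le_rfl, hT⟩
      have e := (hGval hU hS (hmem 0 h0T)).symm
      rw [e]
      show gradient (S 0) (x 0) = p 0
      rw [hx0, hp0, ← hp0']
    have hrs : ∀ τ ∈ Ico 0 T, Gvec S U (τ, x τ)
        ∈ (if τ ∈ Icc 0 T then Metric.closedBall (0 : EuclideanSpace ℝ (Fin n)) R else ∅) := by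
      intro τ hτ
      rw [if_pos (Ico_subset_Icc_self hτ)]
      exact hRr τ (Ico_subset_Icc_self hτ)
    have hps : ∀ τ ∈ Ico 0 T, p τ
        ∈ (if τ ∈ Icc 0 T then Metric.closedBall (0 : EuclideanSpace ℝ (Fin n)) R else ∅) := by
      intro τ hτ
      rw [if_pos (Ico_subset_Icc_self hτ)]
      exact hRp τ (Ico_subset_Icc_self hτ)
    have huniq := ODE_solution_unique_of_mem_Icc_right (fun τ _ => hvlip τ) rcont hr' hrs pc hp' hps h0eq
    exact fun t ht => huniq ht
  -- conservation of energy
  have hcons : ∀ t ∈ Icc 0 T, H (x t) (p t) = H x₀ p₀ := by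
    have hder : ∀ t ∈ Icc 0 T, HasDerivAt (fun s => H (x s) (p s)) 0 t := by
      intro t ht
      have hc : HasDerivAt (fun s => ((x s, p s) :
          EuclideanSpace ℝ (Fin n) × EuclideanSpace ℝ (Fin n)))
          (gradient (fun q => H (x t) q) (p t), -(gradient (fun y => H y (p t)) (x t))) t :=
        (hx t ht).prodMk (hp t ht)
      have hHd := (H_hasFDerivAt hU hH (hxU t ht) (b := p t)).comp_hasDerivAt t hc
      refine hHd.congr_deriv (Eq.symm ?_)
      set ℓ := fderiv ℝ (fun q : EuclideanSpace ℝ (Fin n) × EuclideanSpace ℝ (Fin n) =>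
        H q.1 q.2) (x t, p t) with hℓ
      rw [gradP_val hU hH (hxU t ht), gradX_val hU hH (hxU t ht), ← hℓ]
      have hsplit : ((phi2 n ℓ, -(phi1 n ℓ)) :
          EuclideanSpace ℝ (Fin n) × EuclideanSpace ℝ (Fin n))
          = ((phi2 n ℓ, 0) : EuclideanSpace ℝ (Fin n) × EuclideanSpace ℝ (Fin n))
            + ((0 : EuclideanSpace ℝ (Fin n)), -(phi1 n ℓ)) := by simp
      rw [hsplit, map_add]
      have e1 : ℓ ((phi2 n ℓ, 0) : EuclideanSpace ℝ (Fin n) × EuclideanSpace ℝ (Fin n))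
          = ⟪phi1 n ℓ, phi2 n ℓ⟫ := (inner_phi1 ℓ (phi2 n ℓ)).symm
      have e2 : ℓ (((0 : EuclideanSpace ℝ (Fin n)), -(phi1 n ℓ))) = -⟪phi2 n ℓ, phi1 n ℓ⟫ := by
        rw [show (((0 : EuclideanSpace ℝ (Fin n)), -(phi1 n ℓ)))
          = -(((0 : EuclideanSpace ℝ (Fin n)), phi1 n ℓ)) by simp, map_neg,
          ← inner_phi2 ℓ (phi1 n ℓ)]
      rw [e1, e2, real_inner_comm]
      ring
    have hcst := constant_of_has_deriv_right_zero
      (f := fun s => H (x s) (p s)) (a := 0) (b := T)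
      (fun t ht => ((hder t ht).continuousAt).continuousWithinAt)
      (fun t ht => ((hder t (Ico_subset_Icc_self ht)).hasDerivWithinAt))
    intro t ht
    have := hcst t ht
    rw [this, hx0, hp0]
  -- continuity of the velocity field s ↦ x'(s)
  have hDHc : ContinuousOn (fun q : EuclideanSpace ℝ (Fin n) × EuclideanSpace ℝ (Fin n) =>
      fderiv ℝ (fun r : EuclideanSpace ℝ (Fin n) × EuclideanSpace ℝ (Fin n) => H r.1 r.2) q)
      (U ×ˢ univ) :=
    (hH.of_le (by simp) : ContDiffOn ℝ 1 _ _).continuousOn_fderiv_of_isOpen h1 le_rfl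
  have xdcont : ContinuousOn (fun s => gradient (fun q => H (x s) q) (p s)) (Icc 0 T) := by
    have hmapsUP : ∀ s ∈ Icc 0 T, ((x s, p s) :
        EuclideanSpace ℝ (Fin n) × EuclideanSpace ℝ (Fin n)) ∈ U ×ˢ univ :=
      fun s hs => ⟨hxU s hs, trivial⟩
    have base : ContinuousOn (fun s => phi2 n (fderiv ℝ
        (fun r : EuclideanSpace ℝ (Fin n) × EuclideanSpace ℝ (Fin n) => H r.1 r.2) (x s, p s)))
        (Icc 0 T) :=
      (phi2 n).continuous.comp_continuousOn (hDHc.comp (xc.prodMk pc) hmapsUP)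
    exact base.congr (fun s hs => gradP_val hU hH (hxU s hs))
  intro t ht
  refine ⟨?_, (hGval hU hS (hmem t ht)).trans (key2 t ht)⟩
  have h0t : (0:ℝ) ≤ t := ht.1
  have hIccsub : Icc 0 t ⊆ Icc 0 T := Icc_subset_Icc le_rfl ht.2
  have econt : ContinuousOn (fun s => S s (x s)) (Icc 0 t) :=
    (hS.continuousOn).comp (continuousOn_id.prodMk (xc.mono hIccsub))
      (fun s hs => hmem s (hIccsub hs))
  have ederiv : ∀ s ∈ Ioo 0 t, HasDerivWithinAt (fun u => S u (x u))
      (⟪p s, gradient (fun q => H (x s) q) (p s)⟫ - H x₀ p₀) (Ioi s) s := by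
    intro s hs
    have hsIcc : s ∈ Icc 0 T := ⟨le_of_lt hs.1, le_trans (le_of_lt hs.2) ht.2⟩
    have hq := hmem s hsIcc
    have hc : HasDerivAt (fun u => ((u, x u) : ℝ × EuclideanSpace ℝ (Fin n)))
        (1, gradient (fun q => H (x s) q) (p s)) s := (hasDerivAt_id s).prodMk (hx s hsIcc)
    have hmaps : MapsTo (fun u => ((u, x u) : ℝ × EuclideanSpace ℝ (Fin n))) (Icc s t) (Om U) :=
      fun u hu => hmem u ⟨le_trans hsIcc.1 hu.1, le_trans hu.2 ht.2⟩
    have hchain := (hL hS hq).comp_hasDerivWithinAt s hc.hasDerivWithinAt hmaps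
    have hmemnhds : Icc s t ∈ 𝓝[Ioi s] s := by
      rw [← Ici_inter_Iic]
      exact inter_mem (mem_of_superset self_mem_nhdsWithin Ioi_subset_Ici_self)
        (mem_nhdsWithin_of_mem_nhds (Iic_mem_nhds hs.2))
    have hchain' := hchain.mono_of_mem_nhdsWithin hmemnhds
    refine hchain'.congr_deriv (Eq.symm ?_)
    have hsplit : ((1:ℝ), gradient (fun q => H (x s) q) (p s))
        = ((1:ℝ), (0:EuclideanSpace ℝ (Fin n)))
          + ((0:ℝ), gradient (fun q => H (x s) q) (p s)) := by simp
    rw [hsplit, map_add, hPDE' hU hS hPDE hq]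
    have e2 : Lmap S U (s, x s) ((0:ℝ), gradient (fun q => H (x s) q) (p s))
        = ⟪Gvec S U (s, x s), gradient (fun q => H (x s) q) (p s)⟫ :=
      (inner_phiT _ _).symm
    rw [e2, key2 s hsIcc, hcons s hsIcc]
    ring
  have intcont : ContinuousOn
      (fun s => ⟪p s, gradient (fun q => H (x s) q) (p s)⟫ - H x₀ p₀) (Icc 0 t) :=
    (((pc.mono hIccsub).inner (xdcont.mono hIccsub))).sub continuousOn_const
  have hint : IntervalIntegrable
      (fun s => ⟪p s, gradient (fun q => H (x s) q) (p s)⟫ - H x₀ p₀) MeasureTheory.volume 0 t :=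
    intcont.intervalIntegrable_of_Icc h0t
  have FTC := intervalIntegral.integral_eq_sub_of_hasDeriv_right_of_le h0t econt ederiv hint
  have hint2 : IntervalIntegrable
      (fun s => ⟪p s, gradient (fun q => H (x s) q) (p s)⟫) MeasureTheory.volume 0 t :=
    ((pc.mono hIccsub).inner (xdcont.mono hIccsub)).intervalIntegrable_of_Icc h0t
  have hsplitint : (∫ s in (0:ℝ)..t, (⟪p s, gradient (fun q => H (x s) q) (p s)⟫ - H x₀ p₀))
      = (∫ s in (0:ℝ)..t, ⟪p s, gradient (fun q => H (x s) q) (p s)⟫)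
        - (∫ s in (0:ℝ)..t, H x₀ p₀) := intervalIntegral.integral_sub hint2 intervalIntegrable_const
  have hconstint : (∫ s in (0:ℝ)..t, H x₀ p₀) = H x₀ p₀ * t := by
    rw [intervalIntegral.integral_const, smul_eq_mul, sub_zero, mul_comm]
  have hcongr : (∫ s in (0:ℝ)..t, ⟪p s, gradient (fun q => H (x s) q) (p s)⟫)
      = ∫ s in (0:ℝ)..t, ⟪p s, deriv x s⟫ := by
    apply intervalIntegral.integral_congr
    intro s hs
    rw [uIcc_of_le h0t] at hs
    simp only [(hx s (hIccsub hs)).deriv]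
  rw [hsplitint, hconstint, hcongr] at FTC
  have hx00 : S 0 (x 0) = S 0 x₀ := by rw [hx0]
  linarith [FTC]
end

section
/- Fix λ ∈ ℂ and x₀ > 0, and set p₀ = 1/(|λ|² + x₀). Define, for 0 ≤ t < |λ|² + x₀, x(t) = x₀·(1 − t/(|λ|² + x₀))² and p(t) = p₀/(1 − p₀·t). Then on the interval [0, |λ|² + x₀): x(0) = x₀, p(0) = p₀, x(t) > 0, and (x(t), p(t)) solves Hamilton's equations for the Hamiltonian H(x,p) = −x·p², namely dx/dt = −2·x(t)·p(t) and dp/dt = p(t)². -/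
/-!
Write `a = |λ|² + x₀`. The momentum `p(t) = p₀/(1 − p₀t)` solves the Riccati equation `p' = p²`
for every `p₀`, and with `p₀ = 1/a` it equals `1/(a − t)`. The position
`x(t) = x₀(1 − t/a)² = x₀(a − t)²/a²` then has `x' = −2x₀(a − t)/a² = −2x/(a − t) = −2xp`.
On `[0, a)` the factor `1 − t/a` is positive, which gives `x(t) > 0`.
-/

theorem hasDerivAt_div_one_sub_mul {c t : ℝ} (h : 1 - c * t ≠ 0) :
    HasDerivAt (fun s => c / (1 - c * s)) ((c / (1 - c * t)) ^ 2) t := by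
  refine ((hasDerivAt_const t c).div
    (((hasDerivAt_id' t).const_mul c).const_sub 1) h).congr_deriv ?_
  field_simp
  ring

theorem hasDerivAt_mul_one_sub_div_sq {a b t : ℝ} (ha : a ≠ 0) (ht : t ≠ a) :
    HasDerivAt (fun s => b * (1 - s / a) ^ 2)
      (-2 * (b * (1 - t / a) ^ 2) * (a⁻¹ / (1 - a⁻¹ * t))) t := by
  refine (((((hasDerivAt_id' t).div_const a).const_sub 1).pow 2).const_mul b).congr_deriv ?_
  have hat : a - t ≠ 0 := sub_ne_zero.mpr ht.symm
  rw [← div_eq_inv_mul]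
  norm_num
  field_simp

/-- For the Hamiltonian `H(x,p) = −x·p²`, the curves
`x(t) = x₀(1 − t/(|λ|² + x₀))²` and `p(t) = p₀/(1 − p₀t)` with `p₀ = 1/(|λ|² + x₀)`
solve Hamilton's equations `dx/dt = −2xp`, `dp/dt = p²` on `[0, |λ|² + x₀)`,
with `x(0) = x₀`, `p(0) = p₀` and `x(t) > 0`. -/
theorem circular_characteristics (lam : ℂ) (x₀ : ℝ) (hx₀ : 0 < x₀)
    (p₀ : ℝ) (hp₀ : p₀ = (‖lam‖ ^ 2 + x₀)⁻¹)
    (x p : ℝ → ℝ)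
    (hx : ∀ t : ℝ, x t = x₀ * (1 - t / (‖lam‖ ^ 2 + x₀)) ^ 2)
    (hp : ∀ t : ℝ, p t = p₀ / (1 - p₀ * t)) :
    x 0 = x₀ ∧ p 0 = p₀ ∧
    ∀ t : ℝ, 0 ≤ t → t < ‖lam‖ ^ 2 + x₀ →
      0 < x t ∧ HasDerivAt x (-2 * x t * p t) t ∧ HasDerivAt p ((p t) ^ 2) t := by
  obtain rfl : x = _ := funext hx
  obtain rfl : p = _ := funext hp
  subst hp₀
  set a := ‖lam‖ ^ 2 + x₀
  have ha : 0 < a := by positivity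
  refine ⟨by simp, by simp, fun t _ hta => ⟨?_, ?_, ?_⟩⟩
  · have hfactor : 0 < 1 - t / a := by rwa [sub_pos, div_lt_one ha]
    positivity
  · exact hasDerivAt_mul_one_sub_div_sq ha.ne' hta.ne
  · refine hasDerivAt_div_one_sub_mul ?_
    rw [← div_eq_inv_mul, sub_ne_zero, ne_comm, ne_eq, div_eq_one_iff_eq ha.ne']
    exact hta.ne
end

section
/- Fix λ ∈ ℂ. Let S: [0,∞) × (0,∞) → ℝ be continuously differentiable, smooth on (0,∞) × (0,∞), satisfying the PDE ∂S/∂t (t,x) = x·(∂S/∂x (t,x))² for t > 0, x > 0, with initial condition S(0,x) = log(|λ|² + x) for all x > 0. Then for every x₀ > 0 and every t with 0 ≤ t < |λ|² + x₀, one has S(t, x₀·(1 − t/(|λ|² + x₀))²) = log(|λ|² + x₀) − x₀·t/(|λ|² + x₀)². -/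
open Set Filter Topology

/-- evaluation CLM -/
noncomputable abbrev ev (v : ℝ × ℝ) : ((ℝ × ℝ) →L[ℝ] ℝ) →L[ℝ] ℝ :=
  ContinuousLinearMap.apply ℝ ℝ v

lemma HJ_core (f : ℝ × ℝ → ℝ)
    (hf : ContDiffOn ℝ (⊤ : ℕ∞) f (Ioi 0 ×ˢ Ioi 0))
    (hPDE : ∀ q ∈ (Ioi (0:ℝ) ×ˢ Ioi (0:ℝ)),
      fderiv ℝ f q (1,0) = q.2 * (fderiv ℝ f q (0,1))^2)
    (t₀ x₀ T p₀ : ℝ) (ht₀ : 0 < t₀) (hx₀ : 0 < x₀) (hT : t₀ ≤ T)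
    (hp₀ : p₀ = fderiv ℝ f (t₀, x₀) (0,1))
    (hposT : 0 < 1 - p₀ * (T - t₀)) :
    ∀ t ∈ Icc t₀ T, f (t, x₀ * (1 - p₀*(t-t₀))^2) = f (t₀, x₀) - x₀ * p₀^2 * (t - t₀) := by
  set U : Set (ℝ × ℝ) := Ioi 0 ×ˢ Ioi 0 with hUdef
  have hU : IsOpen U := isOpen_Ioi.prod isOpen_Ioi
  -- positivity of the factor on the whole interval
  have hfac : ∀ s ∈ Icc t₀ T, 0 < 1 - p₀ * (s - t₀) := by
    intro s hs
    rcases le_or_gt p₀ 0 with h | h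
    · nlinarith [hs.1]
    · nlinarith [hs.2]
  set X : ℝ → ℝ := fun s => x₀ * (1 - p₀*(s-t₀))^2 with hXdef
  set P : ℝ → ℝ := fun s => p₀ / (1 - p₀*(s-t₀)) with hPdef
  set γ : ℝ → ℝ × ℝ := fun s => (s, X s) with hγdef
  have hmem : ∀ s ∈ Icc t₀ T, γ s ∈ U := by
    intro s hs
    refine ⟨lt_of_lt_of_le ht₀ hs.1, ?_⟩
    have := hfac s hs
    simp only [hXdef, Set.mem_Ioi]
    positivity
  -- basic differentiability facts
  have hcd : ∀ q ∈ U, ContDiffAt ℝ (⊤ : ℕ∞) f q := fun q hq => hf.contDiffAt (hU.mem_nhds hq)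
  have hfd : ∀ q ∈ U, HasFDerivAt f (fderiv ℝ f q) q := fun q hq =>
    ((hcd q hq).differentiableAt (by simp)).hasFDerivAt
  set f' : (ℝ × ℝ) → (ℝ × ℝ) →L[ℝ] ℝ := fderiv ℝ f with hf'def
  have hcd' : ∀ q ∈ U, ContDiffAt ℝ (⊤ : ℕ∞) f' q := fun q hq => (hcd q hq).fderiv_right (by simp)
  have hfd' : ∀ q ∈ U, HasFDerivAt f' (fderiv ℝ f' q) q := fun q hq =>
    ((hcd' q hq).differentiableAt (by simp)).hasFDerivAt
  have hcd'' : ∀ q ∈ U, ContinuousAt (fderiv ℝ f') q := fun q hq =>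
    (ContDiffAt.fderiv_right (m := (⊤ : ℕ∞)) (hcd' q hq) (by simp)).continuousAt
  have hsymm : ∀ q ∈ U, ∀ v w, fderiv ℝ f' q v w = fderiv ℝ f' q w v := by
    intro q hq v w
    exact second_derivative_symmetric_of_eventually
      (eventually_of_mem (hU.mem_nhds hq) (fun y hy => hfd y hy)) (hfd' q hq) v w
  -- the curve derivatives
  have hXderiv : ∀ s, HasDerivAt X (-2 * x₀ * p₀ * (1 - p₀*(s-t₀))) s := by
    intro s
    have h1 : HasDerivAt (fun s : ℝ => 1 - p₀*(s-t₀)) (-p₀) s := by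
      simpa using (((hasDerivAt_id s).sub_const t₀).const_mul p₀).const_sub 1
    have := ((h1.pow 2).const_mul x₀)
    refine this.congr_deriv ?_
    ring_nf
  have hγderiv : ∀ s, HasDerivAt γ (1, -2 * x₀ * p₀ * (1 - p₀*(s-t₀))) s := by
    intro s
    exact (hasDerivAt_id s).prodMk (hXderiv s)
  have hPderiv : ∀ s ∈ Icc t₀ T, HasDerivAt P ((P s)^2) s := by
    intro s hs
    have hne : (1 - p₀*(s-t₀)) ≠ 0 := ne_of_gt (hfac s hs)
    have h1 : HasDerivAt (fun s : ℝ => 1 - p₀*(s-t₀)) (-p₀) s := by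
      simpa using (((hasDerivAt_id s).sub_const t₀).const_mul p₀).const_sub 1
    have := (hasDerivAt_const s p₀).div h1 hne
    refine this.congr_deriv ?_
    simp only [hPdef]
    field_simp
    ring
  -- Q and its derivative
  set Q : ℝ → ℝ := fun s => f' (γ s) (0,1) with hQdef
  set gx : ℝ → ℝ := fun s => fderiv ℝ f' (γ s) (0,1) (0,1) with hgxdef
  -- derivative of W s := f' (γ s)
  have hW : ∀ s ∈ Icc t₀ T, HasDerivAt (fun s => f' (γ s))
      (fderiv ℝ f' (γ s) (1, -2 * x₀ * p₀ * (1 - p₀*(s-t₀)))) s := by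
    intro s hs
    exact (hfd' (γ s) (hmem s hs)).comp_hasDerivAt s (hγderiv s)
  have hQderiv : ∀ s ∈ Icc t₀ T, HasDerivAt Q
      (fderiv ℝ f' (γ s) (1, -2 * x₀ * p₀ * (1 - p₀*(s-t₀))) (0,1)) s := by
    intro s hs
    exact (ev ((0:ℝ),(1:ℝ))).hasFDerivAt.comp_hasDerivAt s (hW s hs)
  -- compute the mixed second derivative via the PDE
  have hmixed : ∀ s ∈ Icc t₀ T,
      fderiv ℝ f' (γ s) (1,0) (0,1) = (Q s)^2 + 2 * X s * Q s * gx s := by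
    intro s hs
    have hqU := hmem s hs
    have hG : HasFDerivAt (fun q => f' q (0,1))
        ((ev ((0:ℝ),(1:ℝ))).comp (fderiv ℝ f' (γ s))) (γ s) :=
      (ev ((0:ℝ),(1:ℝ))).hasFDerivAt.comp (γ s) (hfd' (γ s) hqU)
    have hh1 : HasFDerivAt (fun q => f' q (1,0))
        ((ev ((1:ℝ),(0:ℝ))).comp (fderiv ℝ f' (γ s))) (γ s) :=
      (ev ((1:ℝ),(0:ℝ))).hasFDerivAt.comp (γ s) (hfd' (γ s) hqU)
    have hsnd : HasFDerivAt (fun q : ℝ × ℝ => q.2) (ContinuousLinearMap.snd ℝ ℝ ℝ) (γ s) :=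
      (ContinuousLinearMap.snd ℝ ℝ ℝ).hasFDerivAt
    have hprod := hsnd.mul (hG.mul hG)
    have heq : (fun q => f' q (1,0)) =ᶠ[nhds (γ s)]
        (fun q : ℝ × ℝ => q.2 * (f' q (0,1) * f' q (0,1))) := by
      filter_upwards [hU.mem_nhds hqU] with q hq
      rw [hPDE q hq, pow_two]
    have hh2 := hprod.congr_of_eventuallyEq heq
    have hEv := congrArg (fun L => L ((0:ℝ),(1:ℝ))) (hh1.unique hh2)
    rw [hsymm (γ s) hqU (1,0) (0,1)]
    simp only [ContinuousLinearMap.comp_apply, ContinuousLinearMap.add_apply,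
      ContinuousLinearMap.coe_smul', Pi.smul_apply, ContinuousLinearMap.coe_snd',
      ev, ContinuousLinearMap.apply_apply, smul_eq_mul, Pi.mul_apply] at hEv
    rw [hEv]
    simp only [hQdef, hgxdef, hγdef]
    ring
  -- decomposed derivative of Q
  have hQderiv' : ∀ s ∈ Icc t₀ T, HasDerivAt Q
      ((Q s)^2 + 2 * X s * Q s * gx s + (-2 * x₀ * p₀ * (1 - p₀*(s-t₀))) * gx s) s := by
    intro s hs
    have h := hQderiv s hs
    have hvec : ((1:ℝ), -2 * x₀ * p₀ * (1 - p₀*(s-t₀))) =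
        ((1:ℝ),(0:ℝ)) + (-2 * x₀ * p₀ * (1 - p₀*(s-t₀))) • ((0:ℝ),(1:ℝ)) := by
      simp [Prod.ext_iff]
    rw [hvec] at h
    simp only [map_add, map_smul, ContinuousLinearMap.add_apply,
      ContinuousLinearMap.coe_smul', Pi.smul_apply, smul_eq_mul] at h
    rw [hmixed s hs] at h
    exact h
  set r : ℝ → ℝ := fun s => Q s - P s with hrdef
  have hrzero : r t₀ = 0 := by
    have h1 : Q t₀ = p₀ := by
      simp only [hQdef, hγdef, hXdef, hp₀]
      norm_num
    have h2 : P t₀ = p₀ := by simp [hPdef]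
    simp [hrdef, h1, h2]
  set B : ℝ → ℝ := fun s => Q s + P s + 2 * X s * gx s with hBdef
  have hrderiv : ∀ s ∈ Icc t₀ T, HasDerivAt r (B s * r s) s := by
    intro s hs
    have h := (hQderiv' s hs).sub (hPderiv s hs)
    have hne : (1 - p₀*(s-t₀)) ≠ 0 := ne_of_gt (hfac s hs)
    refine h.congr_deriv ?_
    simp only [hBdef, hrdef, hPdef, hXdef]
    field_simp
    ring
  -- continuity of B on the interval
  have hBc : ContinuousOn B (Icc t₀ T) := by
    intro s hs
    apply ContinuousAt.continuousWithinAt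
    have hXc : Continuous X := by fun_prop
    have hγc : ContinuousAt γ s := (continuous_id.prodMk hXc).continuousAt
    have hQc : ContinuousAt Q s :=
      ((ContinuousLinearMap.apply ℝ ℝ ((0:ℝ),(1:ℝ))).continuous.continuousAt).comp
        (((hcd' (γ s) (hmem s hs)).continuousAt).comp hγc)
    have hgxc : ContinuousAt gx s :=
      ((ContinuousLinearMap.apply ℝ ℝ ((0:ℝ),(1:ℝ))).continuous.continuousAt).comp
        ((((ContinuousLinearMap.apply ℝ ((ℝ × ℝ) →L[ℝ] ℝ) ((0:ℝ),(1:ℝ))).continuous.continuousAt).comp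
          ((hcd'' (γ s) (hmem s hs)).comp hγc)))
    have hne : (1 - p₀*(s-t₀)) ≠ 0 := ne_of_gt (hfac s hs)
    have hPc : ContinuousAt P s :=
      ContinuousAt.div continuousAt_const (by fun_prop) hne
    exact (hQc.add hPc).add ((continuousAt_const.mul hXc.continuousAt).mul hgxc)
  obtain ⟨C, hC⟩ := isCompact_Icc.exists_bound_of_continuousOn hBc
  have hrcont : ContinuousOn r (Icc t₀ T) := fun s hs =>
    ((hrderiv s hs).continuousAt).continuousWithinAt
  have hr0 : ∀ s ∈ Icc t₀ T, r s = 0 := by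
    intro s hs
    have hbd := norm_le_gronwallBound_of_norm_deriv_right_le (f := r)
      (f' := fun s => B s * r s) (δ := 0) (K := max C 0) (ε := 0) hrcont
      (fun u hu => (hrderiv u (Ico_subset_Icc_self hu)).hasDerivWithinAt)
      (by simp [hrzero])
      (fun u hu => by
        have h1 : ‖B u‖ ≤ max C 0 := le_trans (hC u (Ico_subset_Icc_self hu)) (le_max_left _ _)
        calc ‖B u * r u‖ = ‖B u‖ * ‖r u‖ := norm_mul _ _
          _ ≤ max C 0 * ‖r u‖ + 0 := by nlinarith [norm_nonneg (r u)]) s hs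
    rw [gronwallBound_ε0_δ0] at hbd
    exact norm_le_zero_iff.mp hbd
  have hQP : ∀ s ∈ Icc t₀ T, f' (γ s) (0,1) = P s := by
    intro s hs
    have := hr0 s hs
    have h2 : Q s = P s := by
      simpa [hrdef, sub_eq_zero] using this
    simpa [hQdef] using h2
  -- the value function along the characteristic
  set Φ : ℝ → ℝ := fun s => f (γ s) + x₀ * p₀^2 * (s - t₀) with hΦdef
  have hΦderiv : ∀ s ∈ Icc t₀ T, HasDerivAt Φ 0 s := by
    intro s hs
    have hfd1 : HasDerivAt (fun u => f (γ u))
        (f' (γ s) (1, -2 * x₀ * p₀ * (1 - p₀*(s-t₀)))) s :=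
      (hfd (γ s) (hmem s hs)).comp_hasDerivAt s (hγderiv s)
    have hne : (1 - p₀*(s-t₀)) ≠ 0 := ne_of_gt (hfac s hs)
    have hval : f' (γ s) (1, -2 * x₀ * p₀ * (1 - p₀*(s-t₀))) = - (x₀ * p₀^2) := by
      have hvec : ((1:ℝ), -2 * x₀ * p₀ * (1 - p₀*(s-t₀))) =
          ((1:ℝ),(0:ℝ)) + (-2 * x₀ * p₀ * (1 - p₀*(s-t₀))) • ((0:ℝ),(1:ℝ)) := by
        simp [Prod.ext_iff]
      rw [hvec, map_add, map_smul, smul_eq_mul, hPDE (γ s) (hmem s hs), hQP s hs]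
      simp only [hPdef, hγdef, hXdef]
      field_simp
      ring
    have h := hfd1.add (((hasDerivAt_id s).sub_const t₀).const_mul (x₀*p₀^2))
    rw [hval] at h
    have : -(x₀ * p₀ ^ 2) + x₀ * p₀ ^ 2 * 1 = 0 := by ring
    rw [this] at h
    exact h
  have hconst := constant_of_has_deriv_right_zero (f := Φ) (a := t₀) (b := T)
    (fun s hs => ((hΦderiv s hs).continuousAt).continuousWithinAt)
    (fun s hs => (hΦderiv s (Ico_subset_Icc_self hs)).hasDerivWithinAt)
  intro t ht
  have h := hconst t ht
  have hXt₀ : X t₀ = x₀ := by simp [hXdef]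
  simp only [hΦdef, hγdef, hXt₀, sub_self, mul_zero, add_zero] at h
  linarith [h]

/-- Hamilton–Jacobi analysis of the PDE `∂S/∂t = x·(∂S/∂x)²` with initial condition
`S(0,x) = log(|λ|² + x)`: along the characteristic `x(t) = x₀(1 − t/(|λ|²+x₀))²` one has
`S(t, x(t)) = log(|λ|² + x₀) − x₀·t/(|λ|²+x₀)²` for `0 ≤ t < |λ|² + x₀`. -/
theorem circular_HJ_formula (lam : ℂ) (S : ℝ → ℝ → ℝ)
    (hC1 : ContDiffOn ℝ 1 (fun q : ℝ × ℝ => S q.1 q.2) (Ici 0 ×ˢ Ioi 0))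
    (hSmooth : ContDiffOn ℝ (⊤ : ℕ∞) (fun q : ℝ × ℝ => S q.1 q.2) (Ioi 0 ×ˢ Ioi 0))
    (hPDE : ∀ t : ℝ, 0 < t → ∀ x : ℝ, 0 < x →
      HasDerivAt (fun s : ℝ => S s x) (x * (deriv (fun y : ℝ => S t y) x) ^ 2) t)
    (hInit : ∀ x : ℝ, 0 < x → S 0 x = Real.log (‖lam‖ ^ 2 + x)) :
    ∀ x₀ : ℝ, 0 < x₀ → ∀ t : ℝ, 0 ≤ t → t < ‖lam‖ ^ 2 + x₀ →
      S t (x₀ * (1 - t / (‖lam‖ ^ 2 + x₀)) ^ 2) =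
        Real.log (‖lam‖ ^ 2 + x₀) - x₀ * t / (‖lam‖ ^ 2 + x₀) ^ 2 := by
  set f : ℝ × ℝ → ℝ := fun q : ℝ × ℝ => S q.1 q.2 with hfdef
  set U : Set (ℝ × ℝ) := Ioi 0 ×ˢ Ioi 0 with hUdef
  set V : Set (ℝ × ℝ) := Ici 0 ×ˢ Ioi 0 with hVdef
  have hU : IsOpen U := isOpen_Ioi.prod isOpen_Ioi
  have hUV : U ⊆ V := prod_mono_left Ioi_subset_Ici_self
  have hfd : ∀ q ∈ U, HasFDerivAt f (fderiv ℝ f q) q := fun q hq =>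
    ((hSmooth.contDiffAt (hU.mem_nhds hq)).differentiableAt (by simp)).hasFDerivAt
  -- pointwise form of the PDE
  have hPDE' : ∀ q ∈ U, fderiv ℝ f q (1,0) = q.2 * (fderiv ℝ f q (0,1))^2 := by
    intro q hq
    obtain ⟨t, x⟩ := q
    have htpos : 0 < t := hq.1
    have hxpos : 0 < x := hq.2
    have hcurve : HasDerivAt (fun s : ℝ => ((s, x) : ℝ × ℝ)) (1,0) t :=
      (hasDerivAt_id t).prodMk (hasDerivAt_const t x)
    have h1 : HasDerivAt (fun s : ℝ => f (s, x)) (fderiv ℝ f (t,x) (1,0)) t :=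
      by have := (hfd (t,x) hq).comp_hasDerivAt t hcurve; exact this
    have hcurve2 : HasDerivAt (fun y : ℝ => ((t, y) : ℝ × ℝ)) (0,1) x :=
      (hasDerivAt_const x t).prodMk (hasDerivAt_id x)
    have h2 : HasDerivAt (fun y : ℝ => f (t, y)) (fderiv ℝ f (t,x) (0,1)) x :=
      (hfd (t,x) hq).comp_hasDerivAt x hcurve2
    have hderiv2 : deriv (fun y : ℝ => S t y) x = fderiv ℝ f (t,x) (0,1) := h2.deriv
    have h3 := hPDE t htpos x hxpos
    rw [hderiv2] at h3
    exact h1.unique h3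
  intro x₀ hx₀ t ht0 htlt
  set A : ℝ := ‖lam‖ ^ 2 with hAdef
  have hA : 0 ≤ A := by positivity
  set a : ℝ := A + x₀ with hadef
  have ha : 0 < a := by positivity
  rcases eq_or_lt_of_le ht0 with rfl | htpos
  · have : x₀ * (1 - 0 / a) ^ 2 = x₀ := by norm_num
    rw [this, hInit x₀ hx₀]
    norm_num [hadef]
  -- t > 0 : limit of the characteristic formula as the starting time goes to 0
  have hVuniq : UniqueDiffOn ℝ V := (uniqueDiffOn_Ici 0).prod (uniqueDiffOn_Ioi 0)
  set p : ℝ → ℝ := fun s => fderivWithin ℝ f V (s, x₀) (0,1) with hpdef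
  have hmem0 : ((0:ℝ), x₀) ∈ V := ⟨self_mem_Ici, hx₀⟩
  have hmemV : ∀ s : ℝ, 0 ≤ s → ((s, x₀) : ℝ × ℝ) ∈ V := fun s hs => ⟨hs, hx₀⟩
  set l : Filter ℝ := nhdsWithin 0 (Ioi 0) with hldef
  have hcurveT : Tendsto (fun s : ℝ => ((s, x₀) : ℝ × ℝ)) l (nhdsWithin (0, x₀) V) := by
    rw [tendsto_nhdsWithin_iff]
    constructor
    · exact ((continuous_id.prodMk continuous_const).tendsto 0).comp nhdsWithin_le_nhds
    · exact eventually_nhdsWithin_of_forall (fun s hs => hmemV s (le_of_lt hs))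
  have hplim0 : Tendsto p l (nhds (p 0)) := by
    have hcont' : ContinuousOn (fderivWithin ℝ f V) V :=
      hC1.continuousOn_fderivWithin hVuniq le_rfl
    have h1 := (hcont' (0, x₀) hmem0).tendsto.comp hcurveT
    exact (((ContinuousLinearMap.apply ℝ ℝ ((0:ℝ),(1:ℝ))).continuous.tendsto _).comp h1)
  have hp0 : p 0 = 1 / a := by
    have hL : HasFDerivWithinAt f (fderivWithin ℝ f V (0, x₀)) V (0, x₀) :=
      ((hC1.differentiableOn one_ne_zero) (0, x₀) hmem0).hasFDerivWithinAt
    have hj : HasDerivAt (fun y : ℝ => (((0:ℝ), y) : ℝ × ℝ)) (0,1) x₀ :=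
      (hasDerivAt_const x₀ (0:ℝ)).prodMk (hasDerivAt_id x₀)
    have h1 : HasDerivWithinAt (fun y : ℝ => f (0, y))
        (fderivWithin ℝ f V (0, x₀) (0,1)) (Ioi 0) x₀ :=
      hL.comp_hasDerivWithinAt x₀ (hj.hasDerivWithinAt)
        (fun y hy => ⟨self_mem_Ici, hy⟩)
    have hlog : HasDerivAt (fun y : ℝ => Real.log (A + y)) ((A + x₀)⁻¹ * 1) x₀ := by
      have hadd : HasDerivAt (fun y : ℝ => A + y) 1 x₀ := by
        simpa using (hasDerivAt_id x₀).const_add A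
      exact (Real.hasDerivAt_log (by positivity)).comp x₀ hadd
    have h2 : HasDerivWithinAt (fun y : ℝ => f (0, y)) ((A + x₀)⁻¹ * 1) (Ioi 0) x₀ :=
      (hlog.hasDerivWithinAt).congr (fun y hy => hInit y hy) (hInit x₀ hx₀)
    have hud : UniqueDiffWithinAt ℝ (Ioi (0:ℝ)) x₀ := uniqueDiffOn_Ioi 0 x₀ hx₀
    have heq : p 0 = (A + x₀)⁻¹ * 1 := (h1.derivWithin hud).symm.trans (h2.derivWithin hud)
    rw [heq, mul_one, one_div, hadef]
  have hpeq : ∀ s : ℝ, 0 < s → p s = fderiv ℝ f (s, x₀) (0,1) := by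
    intro s hs
    have hmemU : ((s, x₀) : ℝ × ℝ) ∈ U := ⟨hs, hx₀⟩
    show fderivWithin ℝ f V (s, x₀) (0,1) = fderiv ℝ f (s, x₀) (0,1)
    rw [fderivWithin_of_mem_nhds (mem_nhds_iff.2 ⟨U, hUV, hU, hmemU⟩)]
  have hplim : Tendsto p l (nhds (1 / a)) := hp0 ▸ hplim0
  -- the key eventual identity
  have hfac_lim : Tendsto (fun s => 1 - p s * (t - s)) l (nhds (1 - (1/a) * t)) := by
    have hs_lim : Tendsto (fun s : ℝ => t - s) l (nhds t) := by
      have : Tendsto (fun s : ℝ => s) l (nhds 0) := nhdsWithin_le_nhds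
      simpa using (tendsto_const_nhds (x := t)).sub this
    simpa using (tendsto_const_nhds (x := (1:ℝ))).sub (hplim.mul hs_lim)
  have hfac_pos : 0 < 1 - (1/a) * t := by
    rw [sub_pos]
    rw [div_mul_eq_mul_div, one_mul, div_lt_one ha]
    exact htlt
  have hev_pos : ∀ᶠ s in l, 0 < 1 - p s * (t - s) := hfac_lim.eventually (eventually_gt_nhds hfac_pos)
  have hev_lt : ∀ᶠ s in l, s < t := mem_nhdsWithin_of_mem_nhds (Iio_mem_nhds htpos)
  have hev_mem : ∀ᶠ s in l, 0 < s := eventually_mem_nhdsWithin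
  -- eventual identity from the core lemma
  have hev_eq : ∀ᶠ s in l, f (t, x₀ * (1 - p s * (t - s))^2) =
      f (s, x₀) - x₀ * (p s)^2 * (t - s) := by
    filter_upwards [hev_pos, hev_lt, hev_mem] with s h1 h2 h3
    have := HJ_core f hSmooth hPDE' s x₀ t (p s) h3 hx₀ (le_of_lt h2)
      (hpeq s h3) h1 t ⟨le_of_lt h2, le_refl t⟩
    exact this
  -- limits of both sides
  set xstar : ℝ := x₀ * (1 - t / a)^2 with hxstardef
  have hxstar_pos : 0 < xstar := by
    have h1 : 0 < 1 - t / a := by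
      rw [sub_pos, div_lt_one ha]; exact htlt
    positivity
  have hmemU : ((t, xstar) : ℝ × ℝ) ∈ U := ⟨htpos, hxstar_pos⟩
  have hLHS : Tendsto (fun s => f (t, x₀ * (1 - p s * (t - s))^2)) l (nhds (f (t, xstar))) := by
    have hargl : Tendsto (fun s => x₀ * (1 - p s * (t - s))^2) l (nhds xstar) := by
      have := (hfac_lim.pow 2).const_mul x₀
      have heq : x₀ * (1 - (1/a) * t)^2 = xstar := by
        rw [hxstardef]; ring_nf
      rw [heq] at this
      exact this
    have hfc : ContinuousAt f (t, xstar) :=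
      (hSmooth.contDiffAt (hU.mem_nhds hmemU)).continuousAt
    exact hfc.tendsto.comp ((tendsto_const_nhds (x := t)).prodMk_nhds hargl)
  have hRHS : Tendsto (fun s => f (s, x₀) - x₀ * (p s)^2 * (t - s)) l
      (nhds (f (0, x₀) - x₀ * (1/a)^2 * t)) := by
    have h1 : Tendsto (fun s => f (s, x₀)) l (nhds (f (0, x₀))) :=
      (hC1.continuousOn (0, x₀) hmem0).tendsto.comp hcurveT
    have hs_lim : Tendsto (fun s : ℝ => t - s) l (nhds t) := by
      have : Tendsto (fun s : ℝ => s) l (nhds 0) := nhdsWithin_le_nhds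
      simpa using (tendsto_const_nhds (x := t)).sub this
    have h2 := ((hplim.pow 2).const_mul x₀).mul hs_lim
    exact h1.sub h2
  have : (l : Filter ℝ).NeBot := nhdsGT_neBot 0
  have hfinal := tendsto_nhds_unique (hLHS.congr' hev_eq) hRHS
  -- rewrite into the goal form
  have hval : f (0, x₀) = Real.log a := hInit x₀ hx₀
  have hgoal : f (t, xstar) = Real.log a - x₀ * t / a^2 := by
    rw [hfinal, hval]
    congr 1
    field_simp
  exact hgoal
end

section
/- Fix λ ∈ ℂ and t > 0 with |λ| ≥ √t. Let S: [0,∞) × (0,∞) → ℝ be continuously differentiable, smooth on (0,∞) × (0,∞), satisfying ∂S/∂t (s,x) = x·(∂S/∂x (s,x))² for s > 0, x > 0, with S(0,x) = log(|λ|² + x) for all x > 0. Then lim_{x→0⁺} S(t,x) = log(|λ|²). -/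
open Set Filter Topology

set_option maxHeartbeats 1000000 in
private lemma char_lemma (S : ℝ → ℝ → ℝ)
    (hSmooth : ContDiffOn ℝ (⊤ : ℕ∞) (fun q : ℝ × ℝ => S q.1 q.2) (Ioi 0 ×ˢ Ioi 0))
    (hPDE : ∀ s : ℝ, 0 < s → ∀ x : ℝ, 0 < x →
      HasDerivAt (fun u : ℝ => S u x) (x * (deriv (fun y : ℝ => S s y) x) ^ 2) s)
    (ε t x0 : ℝ) (hε : 0 < ε) (hεt : ε < t) (hx0 : 0 < x0)
    (q : ℝ) (hq : q = deriv (fun y : ℝ => S ε y) x0) (hqt : q * (t - ε) < 1) :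
    S t (x0 * (1 - q * (t - ε))^2) = S ε x0 - (t - ε) * x0 * q^2 := by
  set F : ℝ × ℝ → ℝ := fun z => S z.1 z.2 with hF
  set U : Set (ℝ × ℝ) := Ioi 0 ×ˢ Ioi 0 with hUdef
  have hUo : IsOpen U := isOpen_Ioi.prod isOpen_Ioi
  have hFC : ∀ z ∈ U, ContDiffAt ℝ (⊤ : ℕ∞) F z := fun z hz => hSmooth.contDiffAt (hUo.mem_nhds hz)
  set f' : ℝ × ℝ → (ℝ × ℝ) →L[ℝ] ℝ := fun z => fderiv ℝ F z with hf'
  set p : ℝ × ℝ → ℝ := fun z => f' z ((0:ℝ), (1:ℝ)) with hp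
  set B : ℝ × ℝ → (ℝ × ℝ) →L[ℝ] (ℝ × ℝ) →L[ℝ] ℝ := fun z => fderiv ℝ f' z with hB
  -- vertical line derivative
  have hline : ∀ s x : ℝ, (s, x) ∈ U → HasDerivAt (fun y => S s y) (p (s, x)) x := by
    intro s x hz
    have hd : HasFDerivAt F (f' (s, x)) (s, x) :=
      ((hFC _ hz).differentiableAt (by simp)).hasFDerivAt
    have hl : HasDerivAt (fun y : ℝ => (s, y)) ((0:ℝ), (1:ℝ)) x :=
      (hasDerivAt_const x s).prodMk (hasDerivAt_id x)
    exact hd.comp_hasDerivAt x hl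
  -- time derivative = fderiv applied to (1,0)
  have htime : ∀ s x : ℝ, (s, x) ∈ U →
      HasDerivAt (fun u => S u x) (f' (s, x) ((1:ℝ), (0:ℝ))) s := by
    intro s x hz
    have hd : HasFDerivAt F (f' (s, x)) (s, x) :=
      ((hFC _ hz).differentiableAt (by simp)).hasFDerivAt
    have hl : HasDerivAt (fun u : ℝ => (u, x)) ((1:ℝ), (0:ℝ)) s :=
      (hasDerivAt_id s).prodMk (hasDerivAt_const s x)
    exact hd.comp_hasDerivAt s hl
  have hpde' : ∀ s x : ℝ, (s, x) ∈ U → f' (s, x) ((1:ℝ), (0:ℝ)) = x * (p (s, x))^2 := by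
    intro s x hz
    have h1 := hPDE s hz.1 x hz.2
    rw [(hline s x hz).deriv] at h1
    exact (htime s x hz).unique h1
  have hf'C : ∀ z ∈ U, ContDiffAt ℝ 2 f' z := fun z hz => (hFC z hz).fderiv_right (WithTop.coe_le_coe.2 le_top)
  have hBz : ∀ z ∈ U, HasFDerivAt f' (B z) z := fun z hz =>
    ((hf'C z hz).differentiableAt two_ne_zero).hasFDerivAt
  have hsymm : ∀ z ∈ U, ∀ v w : ℝ × ℝ, B z v w = B z w v := fun z hz =>
    (hFC z hz).isSymmSndFDerivAt (by rw [minSmoothness_of_isRCLikeNormedField]; exact WithTop.coe_le_coe.2 le_top)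
  have happ : ∀ z ∈ U, ∀ v : ℝ × ℝ, HasFDerivAt (fun w => f' w v) ((B z).flip v) z := by
    intro z hz v
    have h := (hBz z hz).clm_apply (hasFDerivAt_const v z)
    simpa using h
  -- vertical derivative of z ↦ f' z v
  have hline2 : ∀ s x : ℝ, (s, x) ∈ U → ∀ v : ℝ × ℝ,
      HasDerivAt (fun y => f' (s, y) v) (B (s, x) ((0:ℝ),(1:ℝ)) v) x := by
    intro s x hz v
    have h := (happ (s,x) hz v).comp_hasDerivAt x
      ((hasDerivAt_const x s).prodMk (hasDerivAt_id x))
    simpa [Function.comp_def] using h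
  -- the key Burgers identity
  have hkey : ∀ s x : ℝ, (s, x) ∈ U →
      B (s,x) ((1:ℝ),(0:ℝ)) ((0:ℝ),(1:ℝ)) =
        (p (s,x))^2 + 2 * x * (p (s,x)) * (B (s,x) ((0:ℝ),(1:ℝ)) ((0:ℝ),(1:ℝ))) := by
    intro s x hz
    have hev : (fun y => f' (s, y) ((1:ℝ),(0:ℝ))) =ᶠ[𝓝 x] fun y => y * (p (s,y))^2 := by
      have hU' : ∀ᶠ y in 𝓝 x, (s, y) ∈ U := by
        filter_upwards [Ioi_mem_nhds hz.2] with y hy using ⟨hz.1, hy⟩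
      filter_upwards [hU'] with y hy using hpde' s y hy
    have hpy : HasDerivAt (fun y => p (s, y)) (B (s,x) ((0:ℝ),(1:ℝ)) ((0:ℝ),(1:ℝ))) x :=
      hline2 s x hz ((0:ℝ),(1:ℝ))
    have h3 : HasDerivAt (fun y => y * (p (s,y))^2)
        (1 * (p (s,x))^2 + x * ((2:ℕ) * p (s,x) ^ 1 * (B (s,x) ((0:ℝ),(1:ℝ)) ((0:ℝ),(1:ℝ))))) x :=
      (hasDerivAt_id x).mul (hpy.pow 2)
    have h4 := h3.congr_of_eventuallyEq hev
    have h5 := (hline2 s x hz ((1:ℝ),(0:ℝ))).unique h4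
    rw [hsymm (s,x) hz ((1:ℝ),(0:ℝ)) ((0:ℝ),(1:ℝ)), h5]
    push_cast
    ring
  set u : ℝ → ℝ := fun s => 1 - q * (s - ε) with hudef
  set γ : ℝ → ℝ := fun s => x0 * (u s)^2 with hγdef
  have hu_pos : ∀ s ∈ Icc ε t, 0 < u s := by
    intro s hs
    rcases le_or_gt q 0 with h | h
    · have : q * (s - ε) ≤ 0 := mul_nonpos_of_nonpos_of_nonneg h (by linarith [hs.1])
      simp only [hudef]; linarith
    · have h1 : q * (s - ε) ≤ q * (t - ε) := by
        apply mul_le_mul_of_nonneg_left _ h.le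
        linarith [hs.2]
      simp only [hudef]; linarith
  have hu_ne : ∀ s ∈ Icc ε t, u s ≠ 0 := fun s hs => (hu_pos s hs).ne'
  have hγ_pos : ∀ s ∈ Icc ε t, 0 < γ s := fun s hs =>
    mul_pos hx0 (pow_pos (hu_pos s hs) 2)
  have hmem : ∀ s ∈ Icc ε t, (s, γ s) ∈ U := by
    intro s hs
    rw [hUdef]
    exact ⟨lt_of_lt_of_le hε hs.1, hγ_pos s hs⟩
  have hu' : ∀ s : ℝ, HasDerivAt u (-q) s := by
    intro s
    have : HasDerivAt (fun s : ℝ => q * (s - ε)) (q * 1) s :=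
      ((hasDerivAt_id s).sub_const ε).const_mul q
    simpa using this.const_sub 1
  have hγ' : ∀ s : ℝ, HasDerivAt γ (-(2 * x0 * q * u s)) s := by
    intro s
    have h := ((hu' s).fun_pow 2).const_mul x0
    refine h.congr_deriv ?_
    push_cast
    ring
  -- derivative of r s = p (s, γ s)
  have hr' : ∀ s ∈ Icc ε t, HasDerivAt (fun s' => p (s', γ s'))
      ((p (s, γ s))^2 + (2 * γ s * p (s, γ s) + -(2 * x0 * q * u s)) *
        (B (s, γ s) ((0:ℝ),(1:ℝ)) ((0:ℝ),(1:ℝ)))) s := by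
    intro s hs
    have hc : HasDerivAt (fun s' => (s', γ s')) ((1:ℝ), -(2 * x0 * q * u s)) s :=
      (hasDerivAt_id s).prodMk (hγ' s)
    have h := (happ (s, γ s) (hmem s hs) ((0:ℝ),(1:ℝ))).comp_hasDerivAt s hc
    have hval : ((B (s, γ s)).flip ((0:ℝ),(1:ℝ))) ((1:ℝ), -(2 * x0 * q * u s))
        = (p (s, γ s))^2 + (2 * γ s * p (s, γ s) + -(2 * x0 * q * u s)) *
          (B (s, γ s) ((0:ℝ),(1:ℝ)) ((0:ℝ),(1:ℝ))) := by
      rw [ContinuousLinearMap.flip_apply]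
      have hdec : ((1:ℝ), -(2 * x0 * q * u s)) =
          ((1:ℝ),(0:ℝ)) + (-(2 * x0 * q * u s)) • ((0:ℝ),(1:ℝ)) := by
        simp [Prod.ext_iff]
      rw [hdec, map_add, map_smul, ContinuousLinearMap.add_apply,
        ContinuousLinearMap.smul_apply, smul_eq_mul, hkey s (γ s) (hmem s hs)]
      ring
    rw [hval] at h
    simpa [hp, Function.comp_def] using h
  -- derivative of q / u
  have hph' : ∀ s ∈ Icc ε t, HasDerivAt (fun s' => q / u s') (q^2 / (u s)^2) s := by
    intro s hs
    have h := (hasDerivAt_const s q).fun_div (hu' s) (hu_ne s hs)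
    refine h.congr_deriv ?_
    ring
  -- derivative of the error e
  have he' : ∀ s ∈ Icc ε t, HasDerivAt (fun s' => p (s', γ s') - q / u s')
      ((p (s, γ s) - q / u s) *
        (p (s, γ s) + q / u s + 2 * γ s * (B (s, γ s) ((0:ℝ),(1:ℝ)) ((0:ℝ),(1:ℝ))))) s := by
    intro s hs
    have h := (hr' s hs).fun_sub (hph' s hs)
    refine h.congr_deriv ?_
    have h0 := hu_ne s hs
    simp only [hγdef]
    field_simp
    ring
  -- continuity of the coefficient
  have hcurve : Continuous (fun s' : ℝ => (s', γ s')) := by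
    apply Continuous.prodMk continuous_id
    simp only [hγdef, hudef]
    fun_prop
  have hκcont : ContinuousOn (fun s => p (s, γ s) + q / u s +
      2 * γ s * (B (s, γ s) ((0:ℝ),(1:ℝ)) ((0:ℝ),(1:ℝ)))) (Icc ε t) := by
    intro s hs
    apply ContinuousAt.continuousWithinAt
    have hzU := hmem s hs
    have hpc : ContinuousAt (fun s' => p (s', γ s')) s := by
      have h1 : ContinuousAt f' (s, γ s) := (hf'C _ hzU).continuousAt
      have h2 : ContinuousAt (fun z => f' z ((0:ℝ),(1:ℝ))) (s, γ s) :=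
        ((ContinuousLinearMap.apply ℝ ℝ ((0:ℝ),(1:ℝ))).continuous.continuousAt).comp h1
      have h3 := ContinuousAt.comp (g := fun z => f' z ((0:ℝ),(1:ℝ)))
        (f := fun s' : ℝ => (s', γ s')) h2 hcurve.continuousAt
      simpa [hp, Function.comp_def] using h3
    have hBc : ContinuousAt (fun s' => B (s', γ s') ((0:ℝ),(1:ℝ)) ((0:ℝ),(1:ℝ))) s := by
      have h1 : ContDiffAt ℝ 1 B (s, γ s) := by
        rw [hB]
        exact (hf'C _ hzU).fderiv_right (by norm_num)
      have h2 : ContinuousAt (fun z => B z ((0:ℝ),(1:ℝ)) ((0:ℝ),(1:ℝ))) (s, γ s) := by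
        have := ((ContinuousLinearMap.apply ℝ ℝ ((0:ℝ),(1:ℝ))).continuous.continuousAt).comp
          (((ContinuousLinearMap.apply ℝ ((ℝ × ℝ) →L[ℝ] ℝ) ((0:ℝ),(1:ℝ))).continuous.continuousAt).comp
            h1.continuousAt)
        exact this
      have h3 := ContinuousAt.comp (g := fun z => B z ((0:ℝ),(1:ℝ)) ((0:ℝ),(1:ℝ)))
        (f := fun s' : ℝ => (s', γ s')) h2 hcurve.continuousAt
      simpa [Function.comp_def] using h3
    have huc : ContinuousAt (fun s' => q / u s') s := by
      apply ContinuousAt.div continuousAt_const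
      · simp only [hudef]; fun_prop
      · exact hu_ne s hs
    have hγc : ContinuousAt γ s := by simp only [hγdef, hudef]; fun_prop
    exact (hpc.add huc).add ((continuousAt_const.mul hγc).mul hBc)
  obtain ⟨M, hM⟩ := isCompact_Icc.exists_bound_of_continuousOn hκcont
  have hM0 : 0 ≤ M := le_trans (norm_nonneg _) (hM ε (left_mem_Icc.2 hεt.le))
  -- e vanishes at ε
  have huε : u ε = 1 := by simp [hudef]
  have hγε : γ ε = x0 := by simp [hγdef, huε]
  have heε : p (ε, γ ε) - q / u ε = 0 := by
    rw [huε, hγε, div_one, hq, sub_eq_zero]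
    have hεU : ((ε:ℝ), x0) ∈ U := by rw [hUdef]; exact ⟨hε, hx0⟩
    exact ((hline ε x0 hεU).deriv).symm
  -- Gronwall: e ≡ 0
  have he0 : ∀ s ∈ Icc ε t, p (s, γ s) = q / u s := by
    intro s hs
    have hcont : ContinuousOn (fun s' => p (s', γ s') - q / u s') (Icc ε t) :=
      fun s' hs' => ((he' s' hs').continuousAt).continuousWithinAt
    have hgb := norm_le_gronwallBound_of_norm_deriv_right_le (δ := 0) (K := M) (ε := 0)
      (a := ε) (b := t)
      (f := fun s' => p (s', γ s') - q / u s')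
      (f' := fun s' => (p (s', γ s') - q / u s') *
        (p (s', γ s') + q / u s' + 2 * γ s' * (B (s', γ s') ((0:ℝ),(1:ℝ)) ((0:ℝ),(1:ℝ)))))
      hcont
      (fun s' hs' => (he' s' (Ico_subset_Icc_self hs')).hasDerivWithinAt)
      (by simp [heε])
      (by
        intro s' hs'
        have h1 := hM s' (Ico_subset_Icc_self hs')
        simp only [norm_mul, add_zero, mul_comm M]
        exact mul_le_mul_of_nonneg_left h1 (norm_nonneg _))
      s hs
    rw [gronwallBound_ε0_δ0] at hgb
    have := norm_eq_zero.1 (le_antisymm hgb (norm_nonneg _))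
    linarith [sub_eq_zero.1 this]
  -- the value function along the curve is affine
  have hΦd : ∀ s ∈ Icc ε t, HasDerivAt (fun s' => S s' (γ s') + (x0 * q^2) * s') 0 s := by
    intro s hs
    have hzU := hmem s hs
    have hc : HasDerivAt (fun s' => (s', γ s')) ((1:ℝ), -(2 * x0 * q * u s)) s :=
      (hasDerivAt_id s).prodMk (hγ' s)
    have hd := (((hFC _ hzU).differentiableAt (by simp)).hasFDerivAt).comp_hasDerivAt s hc
    have hd' : HasDerivAt (fun s' => S s' (γ s'))
        (f' (s, γ s) ((1:ℝ), -(2 * x0 * q * u s))) s := by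
      simpa [hF, hf', Function.comp_def] using hd
    have hval : f' (s, γ s) ((1:ℝ), -(2 * x0 * q * u s)) = -(x0 * q^2) := by
      have hdec : ((1:ℝ), -(2 * x0 * q * u s)) =
          ((1:ℝ),(0:ℝ)) + (-(2 * x0 * q * u s)) • ((0:ℝ),(1:ℝ)) := by
        simp [Prod.ext_iff]
      rw [hdec, map_add, map_smul, smul_eq_mul, hpde' s (γ s) hzU]
      have hpq : f' (s, γ s) ((0:ℝ),(1:ℝ)) = q / u s := by
        rw [show f' (s, γ s) ((0:ℝ),(1:ℝ)) = p (s, γ s) from (by rw [hp])]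
        exact he0 s hs
      rw [hpq, he0 s hs]
      have h0 := hu_ne s hs
      simp only [hγdef]
      field_simp
      ring
    rw [hval] at hd'
    have hfin := hd'.fun_add ((hasDerivAt_id s).const_mul (x0 * q^2))
    refine hfin.congr_deriv ?_
    simp
  have hΦcont : ContinuousOn (fun s' => S s' (γ s') + (x0 * q^2) * s') (Icc ε t) :=
    fun s hs => ((hΦd s hs).continuousAt).continuousWithinAt
  have hconst := constant_of_has_deriv_right_zero hΦcont
    (fun s hs => (hΦd s (Ico_subset_Icc_self hs)).hasDerivWithinAt) t (right_mem_Icc.2 hεt.le)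
  have hγt : γ t = x0 * (1 - q * (t - ε))^2 := by simp [hγdef, hudef]
  simp only [hγt, hγε] at hconst
  linear_combination hconst

set_option maxHeartbeats 1000000 in
private lemma key_lemma (m t : ℝ) (ht : 0 < t) (hm : t ≤ m) (S : ℝ → ℝ → ℝ)
    (hC1 : ContDiffOn ℝ 1 (fun q : ℝ × ℝ => S q.1 q.2) (Ici 0 ×ˢ Ioi 0))
    (hSmooth : ContDiffOn ℝ (⊤ : ℕ∞) (fun q : ℝ × ℝ => S q.1 q.2) (Ioi 0 ×ˢ Ioi 0))
    (hPDE : ∀ s : ℝ, 0 < s → ∀ x : ℝ, 0 < x →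
      HasDerivAt (fun u : ℝ => S u x) (x * (deriv (fun y : ℝ => S s y) x) ^ 2) s)
    (hInit : ∀ x : ℝ, 0 < x → S 0 x = Real.log (m + x))
    (hchar : ∀ ε x0 : ℝ, 0 < ε → ε < t → 0 < x0 →
      ∀ q : ℝ, q = deriv (fun y : ℝ => S ε y) x0 → q * (t - ε) < 1 →
      S t (x0 * (1 - q * (t - ε))^2) = S ε x0 - (t - ε) * x0 * q^2)
    (x0 : ℝ) (hx0 : 0 < x0) :
    S t (x0 * (1 - t / (m + x0))^2) = Real.log (m + x0) - t * x0 / (m + x0)^2 := by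
  have hmx : (0:ℝ) < m + x0 := by linarith
  set F : ℝ × ℝ → ℝ := fun z => S z.1 z.2 with hF
  set A : Set (ℝ × ℝ) := Ici 0 ×ˢ Ioi 0 with hA
  have hAud : UniqueDiffOn ℝ A := (uniqueDiffOn_Ici 0).prod (uniqueDiffOn_Ioi 0)
  have h0A : ((0:ℝ), x0) ∈ A := ⟨self_mem_Ici, hx0⟩
  set L : ℝ × ℝ → (ℝ × ℝ) →L[ℝ] ℝ := fun z => fderivWithin ℝ F A z with hL
  have hLcont : ContinuousOn L A := hC1.continuousOn_fderivWithin hAud le_rfl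
  -- the x-derivative at time 0
  have hL0 : L (0, x0) ((0:ℝ),(1:ℝ)) = 1 / (m + x0) := by
    have hdiff : HasFDerivWithinAt F (L (0, x0)) A (0, x0) :=
      ((hC1.differentiableOn one_ne_zero) _ h0A).hasFDerivWithinAt
    have hlder : HasDerivWithinAt (fun y : ℝ => (0, y)) ((0:ℝ),(1:ℝ)) (Ioi 0) x0 :=
      ((hasDerivAt_const x0 (0:ℝ)).prodMk (hasDerivAt_id x0)).hasDerivWithinAt
    have hmaps : MapsTo (fun y : ℝ => ((0:ℝ), y)) (Ioi 0) A := fun y hy => ⟨self_mem_Ici, hy⟩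
    have h1 : HasDerivWithinAt (fun y : ℝ => S 0 y) (L (0, x0) ((0:ℝ),(1:ℝ))) (Ioi 0) x0 := by
      have := hdiff.comp_hasDerivWithinAt x0 hlder hmaps
      simpa [hF, Function.comp_def] using this
    have h2 : HasDerivWithinAt (fun y : ℝ => S 0 y) (1 / (m + x0)) (Ioi 0) x0 := by
      have hlog : HasDerivAt (fun y : ℝ => Real.log (m + y)) (1 / (m + x0)) x0 := by
        have hadd : HasDerivAt (fun y : ℝ => m + y) 1 x0 := (hasDerivAt_id x0).const_add m
        have := (Real.hasDerivAt_log hmx.ne').comp x0 hadd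
        simpa [one_div, Function.comp_def] using this
      exact (hlog.hasDerivWithinAt).congr (fun y hy => hInit y hy) (hInit x0 hx0)
    exact (uniqueDiffOn_Ioi 0 x0 hx0).eq_deriv _ h1 h2
  -- the x-derivative at positive time, as a function of ε
  set q : ℝ → ℝ := fun ε => deriv (fun y : ℝ => S ε y) x0 with hqdef
  have hqeq : ∀ ε : ℝ, 0 < ε → q ε = L (ε, x0) ((0:ℝ),(1:ℝ)) := by
    intro ε hε
    have hU : (ε, x0) ∈ Ioi (0:ℝ) ×ˢ Ioi (0:ℝ) := ⟨hε, hx0⟩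
    have hnhds : A ∈ 𝓝 ((ε:ℝ), x0) := by
      apply mem_nhds_iff.2
      exact ⟨Ioi 0 ×ˢ Ioi 0, by rw [hA]; exact prod_mono Ioi_subset_Ici_self (subset_refl _),
        isOpen_Ioi.prod isOpen_Ioi, hU⟩
    have hLf : L (ε, x0) = fderiv ℝ F (ε, x0) := fderivWithin_of_mem_nhds hnhds
    have hd : HasFDerivAt F (fderiv ℝ F (ε, x0)) (ε, x0) :=
      ((hSmooth.contDiffAt ((isOpen_Ioi.prod isOpen_Ioi).mem_nhds hU)).differentiableAt
        (by simp)).hasFDerivAt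
    have hl : HasDerivAt (fun y : ℝ => (ε, y)) ((0:ℝ),(1:ℝ)) x0 :=
      (hasDerivAt_const x0 ε).prodMk (hasDerivAt_id x0)
    have h1 : HasDerivAt (fun y : ℝ => S ε y) (fderiv ℝ F (ε, x0) ((0:ℝ),(1:ℝ))) x0 :=
      hd.comp_hasDerivAt x0 hl
    have hqe : q ε = deriv (fun y : ℝ => S ε y) x0 := rfl
    rw [hqe, h1.deriv, hLf]
  -- limit of q as ε → 0⁺
  have htend_pt : Tendsto (fun ε : ℝ => ((ε:ℝ), x0)) (𝓝[>] 0) (𝓝[A] ((0:ℝ), x0)) := by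
    rw [tendsto_nhdsWithin_iff]
    constructor
    · exact Tendsto.prodMk_nhds (tendsto_nhdsWithin_of_tendsto_nhds tendsto_id) tendsto_const_nhds
    · filter_upwards [self_mem_nhdsWithin] with ε (hε : ε ∈ Ioi (0:ℝ))
      exact ⟨mem_Ici.2 (le_of_lt hε), hx0⟩
  have hq_lim : Tendsto q (𝓝[>] 0) (𝓝 (1 / (m + x0))) := by
    have h1 : Tendsto (fun ε : ℝ => L (ε, x0)) (𝓝[>] 0) (𝓝 (L (0, x0))) :=
      (hLcont _ h0A).tendsto.comp htend_pt
    have h2 : Tendsto (fun ε : ℝ => L (ε, x0) ((0:ℝ),(1:ℝ))) (𝓝[>] 0)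
        (𝓝 (L (0, x0) ((0:ℝ),(1:ℝ)))) :=
      ((ContinuousLinearMap.apply ℝ ℝ ((0:ℝ),(1:ℝ))).continuous.continuousAt).tendsto.comp h1
    rw [hL0] at h2
    apply h2.congr'
    filter_upwards [self_mem_nhdsWithin] with ε (hε : ε ∈ Ioi (0:ℝ))
    exact (hqeq ε hε).symm
  -- limit of S ε x0
  have hS_lim : Tendsto (fun ε : ℝ => S ε x0) (𝓝[>] 0) (𝓝 (Real.log (m + x0))) := by
    have h1 : Tendsto F (𝓝[A] ((0:ℝ), x0)) (𝓝 (F (0, x0))) := (hC1.continuousOn _ h0A).tendsto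
    have h2 := h1.comp htend_pt
    rw [show F ((0:ℝ), x0) = Real.log (m + x0) from hInit x0 hx0] at h2
    exact h2
  -- eventual identity from the characteristic lemma
  have hqt_lim : Tendsto (fun ε : ℝ => q ε * (t - ε)) (𝓝[>] 0) (𝓝 (t / (m + x0))) := by
    have h1 : Tendsto (fun ε : ℝ => t - ε) (𝓝[>] 0) (𝓝 (t - 0)) :=
      (tendsto_const_nhds.sub (tendsto_nhdsWithin_of_tendsto_nhds tendsto_id))
    have := hq_lim.mul h1
    simpa [one_div, div_eq_inv_mul] using this
  have hqt_ev : ∀ᶠ ε in 𝓝[>] (0:ℝ), q ε * (t - ε) < 1 := by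
    apply hqt_lim.eventually_lt_const
    rw [div_lt_one hmx]; linarith
  have hev : ∀ᶠ ε in 𝓝[>] (0:ℝ),
      S t (x0 * (1 - q ε * (t - ε))^2) = S ε x0 - (t - ε) * x0 * (q ε)^2 := by
    filter_upwards [hqt_ev, Ioo_mem_nhdsGT_of_mem (left_mem_Ico.2 ht), self_mem_nhdsWithin]
      with ε h1 h2 (h3 : ε ∈ Ioi (0:ℝ))
    exact hchar ε x0 h3 h2.2 hx0 (q ε) rfl h1
  -- pass to the limit
  have hX_lim : Tendsto (fun ε : ℝ => x0 * (1 - q ε * (t - ε))^2) (𝓝[>] 0)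
      (𝓝 (x0 * (1 - t / (m + x0))^2)) := by
    apply Tendsto.const_mul
    exact (tendsto_const_nhds.sub hqt_lim).pow 2
  have hX0pos : 0 < x0 * (1 - t / (m + x0))^2 := by
    have h1 : t / (m + x0) < 1 := by rw [div_lt_one hmx]; linarith
    exact mul_pos hx0 (pow_pos (by linarith) 2)
  have hcontS : ContinuousAt (fun y : ℝ => S t y) (x0 * (1 - t / (m + x0))^2) := by
    have hU : (t, x0 * (1 - t / (m + x0))^2) ∈ Ioi (0:ℝ) ×ˢ Ioi (0:ℝ) := ⟨ht, hX0pos⟩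
    have h1 : ContinuousAt F (t, x0 * (1 - t / (m + x0))^2) :=
      (hSmooth.contDiffAt ((isOpen_Ioi.prod isOpen_Ioi).mem_nhds hU)).continuousAt
    have h2 : ContinuousAt (fun y : ℝ => ((t:ℝ), y)) (x0 * (1 - t / (m + x0))^2) :=
      (continuous_const.prodMk continuous_id).continuousAt
    exact h1.comp h2
  have hLHS : Tendsto (fun ε : ℝ => S t (x0 * (1 - q ε * (t - ε))^2)) (𝓝[>] 0)
      (𝓝 (S t (x0 * (1 - t / (m + x0))^2))) := hcontS.tendsto.comp hX_lim
  have hRHS : Tendsto (fun ε : ℝ => S ε x0 - (t - ε) * x0 * (q ε)^2) (𝓝[>] 0)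
      (𝓝 (Real.log (m + x0) - (t - 0) * x0 * (1 / (m + x0))^2)) := by
    apply hS_lim.sub
    exact (((tendsto_const_nhds.sub (tendsto_nhdsWithin_of_tendsto_nhds tendsto_id)).mul
      tendsto_const_nhds).mul (hq_lim.pow 2))
  have := tendsto_nhds_unique (hLHS.congr' hev) hRHS
  rw [this]
  field_simp
  ring

/-- For the PDE `∂S/∂t = x·(∂S/∂x)²` with initial condition `S(0,x) = log(|λ|² + x)`:
if `|λ| ≥ √t`, then `lim_{x→0⁺} S(t,x) = log(|λ|²)`.  (This is the log potential of the
circular Brownian motion outside the disk of radius `√t`.) -/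
theorem circular_potential_outside (lam : ℂ) (t : ℝ) (ht : 0 < t)
    (hlam : Real.sqrt t ≤ ‖lam‖)
    (S : ℝ → ℝ → ℝ)
    (hC1 : ContDiffOn ℝ 1 (fun q : ℝ × ℝ => S q.1 q.2) (Ici 0 ×ˢ Ioi 0))
    (hSmooth : ContDiffOn ℝ (⊤ : ℕ∞) (fun q : ℝ × ℝ => S q.1 q.2) (Ioi 0 ×ˢ Ioi 0))
    (hPDE : ∀ s : ℝ, 0 < s → ∀ x : ℝ, 0 < x →
      HasDerivAt (fun u : ℝ => S u x) (x * (deriv (fun y : ℝ => S s y) x) ^ 2) s)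
    (hInit : ∀ x : ℝ, 0 < x → S 0 x = Real.log (‖lam‖ ^ 2 + x)) :
    Tendsto (fun x : ℝ => S t x) (nhdsWithin 0 (Ioi 0))
      (𝓝 (Real.log (‖lam‖ ^ 2))) := by
  set m : ℝ := ‖lam‖ ^ 2 with hmdef
  have hm : t ≤ m := by
    have h1 : Real.sqrt t ^ 2 ≤ ‖lam‖ ^ 2 :=
      pow_le_pow_left₀ (Real.sqrt_nonneg t) hlam 2
    rwa [Real.sq_sqrt ht.le] at h1
  have hkey : ∀ y : ℝ, 0 < y →
      S t (y * (1 - t / (m + y))^2) = Real.log (m + y) - t * y / (m + y)^2 := by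
    intro y hy
    exact key_lemma m t ht hm S hC1 hSmooth hPDE hInit
      (fun ε x0 hε hεt hx0 q hq hqt => char_lemma S hSmooth hPDE ε t x0 hε hεt hx0 q hq hqt) y hy
  have hm0 : 0 < m := lt_of_lt_of_le ht hm
  set X : ℝ → ℝ := fun y => y * (1 - t / (m + y))^2 with hXdef
  set C : ℝ := 1/m + t/m^2 with hCdef
  have hC0 : 0 < C := by rw [hCdef]; positivity
  have hfrac : ∀ y : ℝ, 0 < y → 0 < 1 - t/(m+y) ∧ 1 - t/(m+y) ≤ 1 := by
    intro y hy
    have hmy : 0 < m + y := by linarith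
    constructor
    · have : t / (m + y) < 1 := by rw [div_lt_one hmy]; linarith
      linarith
    · have : 0 ≤ t / (m + y) := by positivity
      linarith
  have hXpos : ∀ y : ℝ, 0 < y → 0 < X y := fun y hy =>
    mul_pos hy (pow_pos (hfrac y hy).1 2)
  have hXle : ∀ y : ℝ, 0 < y → X y ≤ y := by
    intro y hy
    have h1 := (hfrac y hy).1
    have h2 := (hfrac y hy).2
    have : (1 - t/(m+y))^2 ≤ 1 := by nlinarith
    calc X y = y * (1 - t/(m+y))^2 := rfl
    _ ≤ y * 1 := mul_le_mul_of_nonneg_left this hy.le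
    _ = y := mul_one y
  have hbound : ∀ y : ℝ, 0 < y → |S t (X y) - Real.log m| ≤ C * y := by
    intro y hy
    have hmy : 0 < m + y := by linarith
    have heq : S t (X y) = Real.log (m + y) - t * y / (m + y)^2 := hkey y hy
    rw [heq]
    have ha1 : 0 ≤ Real.log (m + y) - Real.log m :=
      sub_nonneg.2 (Real.log_le_log hm0 (by linarith))
    have ha2 : Real.log (m + y) - Real.log m ≤ y / m := by
      rw [← Real.log_div hmy.ne' hm0.ne']
      have h := Real.log_le_sub_one_of_pos (show (0:ℝ) < (m+y)/m by positivity)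
      calc Real.log ((m+y)/m) ≤ (m+y)/m - 1 := h
      _ = y / m := by field_simp; ring
    have hb1 : 0 ≤ t * y / (m + y)^2 := by positivity
    have hb2 : t * y / (m + y)^2 ≤ t * y / m^2 := by
      apply div_le_div_of_nonneg_left (by positivity) (by positivity) (by nlinarith)
    have hCy : C * y = y/m + t*y/m^2 := by rw [hCdef]; ring
    rw [abs_le, hCy]
    constructor <;> [linarith; linarith]
  rw [Metric.tendsto_nhdsWithin_nhds]
  intro δ hδ
  set y0 : ℝ := min 1 (δ / (2*C)) with hy0def
  have hy0 : 0 < y0 := by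
    rw [hy0def]
    apply lt_min one_pos
    positivity
  refine ⟨X y0, hXpos y0 hy0, ?_⟩
  intro x hx hdist
  have hxpos : 0 < x := hx
  have hxlt : x < X y0 := by rwa [Real.dist_eq, sub_zero, abs_of_pos hxpos] at hdist
  set c : ℝ := min y0 (x/2) with hcdef
  have hc0 : 0 < c := lt_min hy0 (by linarith)
  have hcy : c ≤ y0 := min_le_left _ _
  have hXc : X c < x :=
    lt_of_le_of_lt (le_trans (hXle c hc0) (min_le_right _ _)) (by linarith)
  have hXcont : ContinuousOn X (Icc c y0) := by
    apply ContinuousOn.mul continuousOn_id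
    apply ContinuousOn.pow
    apply ContinuousOn.sub continuousOn_const
    apply ContinuousOn.div continuousOn_const
    · fun_prop
    · intro y hy
      have : 0 < m + y := by
        have := hy.1
        have := hc0
        linarith [hy.1]
      exact this.ne'
  obtain ⟨y, hy, hXy⟩ := intermediate_value_Icc hcy hXcont ⟨hXc.le, hxlt.le⟩
  have hy1 : 0 < y := lt_of_lt_of_le hc0 hy.1
  have hy2 : y ≤ y0 := hy.2
  rw [Real.dist_eq, ← hXy]
  calc |S t (X y) - Real.log m| ≤ C * y := hbound y hy1
  _ ≤ C * y0 := mul_le_mul_of_nonneg_left hy2 hC0.le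
  _ < δ := by
    have h1 : y0 ≤ δ / (2*C) := min_le_right _ _
    have h2 : C * (δ / (2*C)) = δ/2 := by field_simp
    calc C * y0 ≤ C * (δ / (2*C)) := mul_le_mul_of_nonneg_left h1 hC0.le
    _ = δ/2 := h2
    _ < δ := by linarith
end

section
/- Fix λ ∈ ℂ and t > 0 with |λ| < √t. Let S: [0,∞) × (0,∞) → ℝ be continuously differentiable, smooth on (0,∞) × (0,∞), satisfying ∂S/∂t (s,x) = x·(∂S/∂x (s,x))² for s > 0, x > 0, with S(0,x) = log(|λ|² + x) for all x > 0. Then lim_{x→0⁺} S(t,x) = log t − 1 + |λ|²/t. -/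
open Set Filter Topology

namespace CPI

theorem hUopen : IsOpen ((Ioi (0:ℝ)) ×ˢ (Ioi (0:ℝ))) := isOpen_Ioi.prod isOpen_Ioi

variable {S : ℝ → ℝ → ℝ}

theorem hasF (hSmooth : ContDiffOn ℝ (⊤ : ℕ∞) (fun q : ℝ × ℝ => S q.1 q.2) (Ioi 0 ×ˢ Ioi 0))
    {w : ℝ×ℝ} (hw : w ∈ (Ioi (0:ℝ)) ×ˢ (Ioi (0:ℝ))) :
    HasFDerivAt (fun q : ℝ × ℝ => S q.1 q.2) (fderiv ℝ (fun q : ℝ × ℝ => S q.1 q.2) w) w :=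
  ((hSmooth.differentiableOn (by simp)).differentiableAt (hUopen.mem_nhds hw)).hasFDerivAt

theorem lineV {s x : ℝ} : HasDerivAt (fun y : ℝ => ((s, y) : ℝ×ℝ)) (0,1) x :=
  (hasDerivAt_const x s).prodMk (hasDerivAt_id x)

theorem lineH {s x : ℝ} : HasDerivAt (fun u : ℝ => ((u, x) : ℝ×ℝ)) (1,0) s :=
  (hasDerivAt_id s).prodMk (hasDerivAt_const s x)

theorem hasDx (hSmooth : ContDiffOn ℝ (⊤ : ℕ∞) (fun q : ℝ × ℝ => S q.1 q.2) (Ioi 0 ×ˢ Ioi 0))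
    {s x : ℝ} (hs : 0 < s) (hx : 0 < x) :
    HasDerivAt (fun y : ℝ => S s y)
      (fderiv ℝ (fun q : ℝ × ℝ => S q.1 q.2) (s,x) ((0:ℝ),(1:ℝ))) x :=
  (hasF hSmooth (Set.mk_mem_prod hs hx)).comp_hasDerivAt x lineV

theorem sx_eq (hSmooth : ContDiffOn ℝ (⊤ : ℕ∞) (fun q : ℝ × ℝ => S q.1 q.2) (Ioi 0 ×ˢ Ioi 0))
    {s x : ℝ} (hs : 0 < s) (hx : 0 < x) :
    deriv (fun y : ℝ => S s y) x
      = fderiv ℝ (fun q : ℝ × ℝ => S q.1 q.2) (s,x) ((0:ℝ),(1:ℝ)) :=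
  (hasDx hSmooth hs hx).deriv

theorem st_eq (hSmooth : ContDiffOn ℝ (⊤ : ℕ∞) (fun q : ℝ × ℝ => S q.1 q.2) (Ioi 0 ×ˢ Ioi 0))
    (hPDE : ∀ s : ℝ, 0 < s → ∀ x : ℝ, 0 < x →
      HasDerivAt (fun u : ℝ => S u x) (x * (deriv (fun y : ℝ => S s y) x) ^ 2) s)
    {s x : ℝ} (hs : 0 < s) (hx : 0 < x) :
    fderiv ℝ (fun q : ℝ × ℝ => S q.1 q.2) (s,x) ((1:ℝ),(0:ℝ))
      = x * (fderiv ℝ (fun q : ℝ × ℝ => S q.1 q.2) (s,x) ((0:ℝ),(1:ℝ)))^2 := by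
  have h2 : HasDerivAt (fun u : ℝ => S u x)
      (fderiv ℝ (fun q : ℝ × ℝ => S q.1 q.2) (s,x) ((1:ℝ),(0:ℝ))) s :=
    by have h := (hasF hSmooth (Set.mk_mem_prod hs hx)).comp_hasDerivAt s (lineH (x := x)); exact h
  have := h2.unique (hPDE s hs x hx)
  rw [this, sx_eq hSmooth hs hx]

theorem contDf (hSmooth : ContDiffOn ℝ (⊤ : ℕ∞) (fun q : ℝ × ℝ => S q.1 q.2) (Ioi 0 ×ˢ Ioi 0)) :
    ContDiffOn ℝ 1 (fderiv ℝ (fun q : ℝ × ℝ => S q.1 q.2)) (Ioi 0 ×ˢ Ioi 0) :=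
  hSmooth.fderiv_of_isOpen hUopen (by exact WithTop.coe_le_coe.mpr le_top)

theorem hasF2 (hSmooth : ContDiffOn ℝ (⊤ : ℕ∞) (fun q : ℝ × ℝ => S q.1 q.2) (Ioi 0 ×ˢ Ioi 0))
    {w : ℝ×ℝ} (hw : w ∈ (Ioi (0:ℝ)) ×ˢ (Ioi (0:ℝ))) :
    HasFDerivAt (fderiv ℝ (fun q : ℝ × ℝ => S q.1 q.2))
      (fderiv ℝ (fderiv ℝ (fun q : ℝ × ℝ => S q.1 q.2)) w) w :=
  (((contDf hSmooth).differentiableOn one_ne_zero).differentiableAt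
    (hUopen.mem_nhds hw)).hasFDerivAt

theorem symm2 (hSmooth : ContDiffOn ℝ (⊤ : ℕ∞) (fun q : ℝ × ℝ => S q.1 q.2) (Ioi 0 ×ˢ Ioi 0))
    {w : ℝ×ℝ} (hw : w ∈ (Ioi (0:ℝ)) ×ˢ (Ioi (0:ℝ))) (v u : ℝ×ℝ) :
    fderiv ℝ (fderiv ℝ (fun q : ℝ × ℝ => S q.1 q.2)) w v u
      = fderiv ℝ (fderiv ℝ (fun q : ℝ × ℝ => S q.1 q.2)) w u v := by
  apply second_derivative_symmetric_of_eventually (f := fun q : ℝ × ℝ => S q.1 q.2) ?_ (hasF2 hSmooth hw) v u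
  filter_upwards [hUopen.mem_nhds hw] with y hy using hasF hSmooth hy

theorem mixed (hSmooth : ContDiffOn ℝ (⊤ : ℕ∞) (fun q : ℝ × ℝ => S q.1 q.2) (Ioi 0 ×ˢ Ioi 0))
    (hPDE : ∀ s : ℝ, 0 < s → ∀ x : ℝ, 0 < x →
      HasDerivAt (fun u : ℝ => S u x) (x * (deriv (fun y : ℝ => S s y) x) ^ 2) s)
    {s x : ℝ} (hs : 0 < s) (hx : 0 < x) :
    fderiv ℝ (fderiv ℝ (fun q : ℝ × ℝ => S q.1 q.2)) (s,x) ((0:ℝ),(1:ℝ)) ((1:ℝ),(0:ℝ))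
      = (fderiv ℝ (fun q : ℝ × ℝ => S q.1 q.2) (s,x) ((0:ℝ),(1:ℝ)))^2
        + 2*x*(fderiv ℝ (fun q : ℝ × ℝ => S q.1 q.2) (s,x) ((0:ℝ),(1:ℝ)))
          * (fderiv ℝ (fderiv ℝ (fun q : ℝ × ℝ => S q.1 q.2)) (s,x) ((0:ℝ),(1:ℝ)) ((0:ℝ),(1:ℝ))) := by
  have hDf : HasDerivAt (fun y : ℝ => fderiv ℝ (fun q : ℝ × ℝ => S q.1 q.2) (s,y))
      (fderiv ℝ (fderiv ℝ (fun q : ℝ × ℝ => S q.1 q.2)) (s,x) ((0:ℝ),(1:ℝ))) x :=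
    (hasF2 hSmooth (Set.mk_mem_prod hs hx)).comp_hasDerivAt x lineV
  have hL : HasDerivAt (fun y : ℝ => fderiv ℝ (fun q : ℝ × ℝ => S q.1 q.2) (s,y) ((1:ℝ),(0:ℝ)))
      (fderiv ℝ (fderiv ℝ (fun q : ℝ × ℝ => S q.1 q.2)) (s,x) ((0:ℝ),(1:ℝ)) ((1:ℝ),(0:ℝ))) x := by
    exact ((ContinuousLinearMap.apply ℝ ℝ (((1:ℝ),(0:ℝ)) : ℝ × ℝ)).hasFDerivAt.comp_hasDerivAt x hDf)
  have hM : HasDerivAt (fun y : ℝ => fderiv ℝ (fun q : ℝ × ℝ => S q.1 q.2) (s,y) ((0:ℝ),(1:ℝ)))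
      (fderiv ℝ (fderiv ℝ (fun q : ℝ × ℝ => S q.1 q.2)) (s,x) ((0:ℝ),(1:ℝ)) ((0:ℝ),(1:ℝ))) x := by
    exact ((ContinuousLinearMap.apply ℝ ℝ (((0:ℝ),(1:ℝ)) : ℝ × ℝ)).hasFDerivAt.comp_hasDerivAt x hDf)
  have hR : HasDerivAt (fun y : ℝ => y * (fderiv ℝ (fun q : ℝ × ℝ => S q.1 q.2) (s,y) ((0:ℝ),(1:ℝ)))^2)
      (1 * (fderiv ℝ (fun q : ℝ × ℝ => S q.1 q.2) (s,x) ((0:ℝ),(1:ℝ)))^2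
        + x * ((2:ℕ) * fderiv ℝ (fun q : ℝ × ℝ => S q.1 q.2) (s,x) ((0:ℝ),(1:ℝ)) ^ (2-1)
          * fderiv ℝ (fderiv ℝ (fun q : ℝ × ℝ => S q.1 q.2)) (s,x) ((0:ℝ),(1:ℝ)) ((0:ℝ),(1:ℝ)))) x :=
    (hasDerivAt_id x).mul (hM.pow 2)
  have heq : (fun y : ℝ => fderiv ℝ (fun q : ℝ × ℝ => S q.1 q.2) (s,y) ((1:ℝ),(0:ℝ)))
      =ᶠ[𝓝 x] (fun y : ℝ => y * (fderiv ℝ (fun q : ℝ × ℝ => S q.1 q.2) (s,y) ((0:ℝ),(1:ℝ)))^2) := by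
    filter_upwards [Ioi_mem_nhds hx] with y hy
    exact st_eq hSmooth hPDE hs hy
  have h := hL.unique (hR.congr_of_eventuallyEq heq)
  rw [h]; push_cast; ring

theorem evalD1 (A : ℝ×ℝ →L[ℝ] ℝ) (r : ℝ) :
    A ((1:ℝ), r) = A ((1:ℝ),(0:ℝ)) + r * A ((0:ℝ),(1:ℝ)) := by
  have h : ((1,r) : ℝ×ℝ) = ((1:ℝ),(0:ℝ)) + r • ((0:ℝ),(1:ℝ)) := by
    simp [Prod.ext_iff]
  rw [h, map_add, map_smul]; simp

theorem evalD2 (A : ℝ×ℝ →L[ℝ] (ℝ×ℝ →L[ℝ] ℝ)) (r : ℝ) :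
    A ((1:ℝ), r) ((0:ℝ),(1:ℝ))
      = A ((1:ℝ),(0:ℝ)) ((0:ℝ),(1:ℝ)) + r * A ((0:ℝ),(1:ℝ)) ((0:ℝ),(1:ℝ)) := by
  have h : ((1,r) : ℝ×ℝ) = ((1:ℝ),(0:ℝ)) + r • ((0:ℝ),(1:ℝ)) := by
    simp [Prod.ext_iff]
  rw [h, map_add, map_smul]; simp

theorem key (hSmooth : ContDiffOn ℝ (⊤ : ℕ∞) (fun q : ℝ × ℝ => S q.1 q.2) (Ioi 0 ×ˢ Ioi 0))
    (hPDE : ∀ s : ℝ, 0 < s → ∀ x : ℝ, 0 < x →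
      HasDerivAt (fun u : ℝ => S u x) (x * (deriv (fun y : ℝ => S s y) x) ^ 2) s)
    {t ε x₀ : ℝ} (htε : ε < t) (hε : 0 < ε) (hx₀ : 0 < x₀)
    (hp : deriv (fun y : ℝ => S ε y) x₀ * (t - ε) < 1) :
    S t (x₀ * (1 - deriv (fun y : ℝ => S ε y) x₀ * (t - ε))^2)
      = S ε x₀ - (t - ε) * x₀ * (deriv (fun y : ℝ => S ε y) x₀)^2 := by
  set p₀ := deriv (fun y : ℝ => S ε y) x₀ with hp₀
  set T := t - ε with hTdef
  have hT : 0 < T := by simp [hTdef]; linarith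
  have hpos : ∀ σ ∈ Icc (0:ℝ) T, 0 < 1 - p₀ * σ := by
    intro σ hσ
    rcases le_or_gt p₀ 0 with h | h
    · nlinarith [hσ.1]
    · nlinarith [hσ.1, hσ.2]
  set X : ℝ → ℝ := fun σ => x₀ * (1 - p₀ * σ)^2 with hXdef
  set P : ℝ → ℝ := fun σ => p₀ * (1 - p₀ * σ)⁻¹ with hPdef
  set γ : ℝ → ℝ × ℝ := fun σ => (ε + σ, X σ) with hγdef
  have hmem : ∀ σ ∈ Icc (0:ℝ) T, γ σ ∈ (Ioi (0:ℝ)) ×ˢ (Ioi (0:ℝ)) := by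
    intro σ hσ
    refine ⟨by simp [hγdef]; linarith [hσ.1], ?_⟩
    have := hpos σ hσ
    simp only [hγdef, hXdef]
    exact mul_pos hx₀ (pow_pos this 2)
  -- derivatives of the explicit curves
  have hlin : ∀ σ : ℝ, HasDerivAt (fun σ : ℝ => 1 - p₀ * σ) (-p₀) σ := by
    intro σ
    simpa using ((hasDerivAt_id σ).const_mul p₀).const_sub 1
  have hX' : ∀ σ : ℝ, HasDerivAt X (x₀ * (2 * (1 - p₀ * σ) * (-p₀))) σ := by
    intro σ
    simpa [hXdef] using (((hlin σ).pow 2).const_mul x₀)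
  have hP' : ∀ σ ∈ Icc (0:ℝ) T, HasDerivAt P (p₀ * (p₀ / (1 - p₀ * σ)^2)) σ := by
    intro σ hσ
    have h0 := (hpos σ hσ).ne'
    have := ((hlin σ).inv h0).const_mul p₀
    simpa [hPdef, neg_neg] using this
  have hγ' : ∀ σ : ℝ, HasDerivAt γ ((1, x₀ * (2 * (1 - p₀ * σ) * (-p₀))) : ℝ × ℝ) σ := by
    intro σ
    exact ((hasDerivAt_id σ).const_add ε).prodMk (hX' σ)
  -- the function q
  set q : ℝ → ℝ := fun σ => fderiv ℝ (fun q : ℝ × ℝ => S q.1 q.2) (γ σ) ((0:ℝ),(1:ℝ)) - P σ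
    with hqdef
  set c : ℝ → ℝ := fun σ =>
    fderiv ℝ (fun q : ℝ × ℝ => S q.1 q.2) (γ σ) ((0:ℝ),(1:ℝ)) + P σ
      + 2 * X σ * fderiv ℝ (fderiv ℝ (fun q : ℝ × ℝ => S q.1 q.2)) (γ σ) ((0:ℝ),(1:ℝ)) ((0:ℝ),(1:ℝ))
    with hcdef
  have hq' : ∀ σ ∈ Icc (0:ℝ) T, HasDerivAt q (c σ * q σ) σ := by
    intro σ hσ
    have hmemσ := hmem σ hσ
    have hne := (hpos σ hσ).ne'
    have hεσ : 0 < ε + σ := by linarith [hσ.1]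
    have hXσ : 0 < X σ := mul_pos hx₀ (pow_pos (hpos σ hσ) 2)
    have hDfγ : HasDerivAt (fun σ => fderiv ℝ (fun q : ℝ × ℝ => S q.1 q.2) (γ σ))
        (fderiv ℝ (fderiv ℝ (fun q : ℝ × ℝ => S q.1 q.2)) (γ σ)
          ((1, x₀ * (2 * (1 - p₀ * σ) * (-p₀))) : ℝ × ℝ)) σ :=
      (hasF2 hSmooth hmemσ).comp_hasDerivAt σ (hγ' σ)
    have hQ1 : HasDerivAt (fun σ => fderiv ℝ (fun q : ℝ × ℝ => S q.1 q.2) (γ σ) ((0:ℝ),(1:ℝ)))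
        (fderiv ℝ (fderiv ℝ (fun q : ℝ × ℝ => S q.1 q.2)) (γ σ)
          ((1, x₀ * (2 * (1 - p₀ * σ) * (-p₀))) : ℝ × ℝ) ((0:ℝ),(1:ℝ))) σ := by
      exact
        ((ContinuousLinearMap.apply ℝ ℝ (((0:ℝ),(1:ℝ)) : ℝ × ℝ)).hasFDerivAt.comp_hasDerivAt σ hDfγ)
    have hq'' := hQ1.sub (hP' σ hσ)
    refine hq''.congr_deriv ?_
    rw [evalD2]
    have hsym : fderiv ℝ (fderiv ℝ (fun q : ℝ × ℝ => S q.1 q.2)) (γ σ) ((1:ℝ),(0:ℝ)) ((0:ℝ),(1:ℝ))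
        = fderiv ℝ (fderiv ℝ (fun q : ℝ × ℝ => S q.1 q.2)) (γ σ) ((0:ℝ),(1:ℝ)) ((1:ℝ),(0:ℝ)) :=
      symm2 hSmooth hmemσ _ _
    have hmix : fderiv ℝ (fderiv ℝ (fun q : ℝ × ℝ => S q.1 q.2)) (γ σ) ((0:ℝ),(1:ℝ)) ((1:ℝ),(0:ℝ))
        = (fderiv ℝ (fun q : ℝ × ℝ => S q.1 q.2) (γ σ) ((0:ℝ),(1:ℝ)))^2
          + 2 * (X σ) * (fderiv ℝ (fun q : ℝ × ℝ => S q.1 q.2) (γ σ) ((0:ℝ),(1:ℝ)))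
            * (fderiv ℝ (fderiv ℝ (fun q : ℝ × ℝ => S q.1 q.2)) (γ σ) ((0:ℝ),(1:ℝ)) ((0:ℝ),(1:ℝ))) := by
      have := mixed hSmooth hPDE hεσ hXσ
      exact this
    rw [hsym, hmix]
    simp only [hcdef, hqdef, hPdef, hXdef]
    set u := fderiv ℝ (fun q : ℝ × ℝ => S q.1 q.2) (γ σ) ((0:ℝ),(1:ℝ))
    set v := fderiv ℝ (fderiv ℝ (fun q : ℝ × ℝ => S q.1 q.2)) (γ σ) ((0:ℝ),(1:ℝ)) ((0:ℝ),(1:ℝ))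
    field_simp
    ring
  -- continuity on the compact interval
  have hγcont : ContinuousOn γ (Icc (0:ℝ) T) := by
    apply Continuous.continuousOn
    fun_prop
  have hDfcont : ContinuousOn (fun σ => fderiv ℝ (fun q : ℝ × ℝ => S q.1 q.2) (γ σ) ((0:ℝ),(1:ℝ)))
      (Icc (0:ℝ) T) := by
    exact (ContinuousLinearMap.apply ℝ ℝ (((0:ℝ),(1:ℝ)) : ℝ × ℝ)).continuous.comp_continuousOn
      (((contDf hSmooth).continuousOn).comp hγcont hmem)
  have hD2cont : ContinuousOn
      (fun σ => fderiv ℝ (fderiv ℝ (fun q : ℝ × ℝ => S q.1 q.2)) (γ σ) ((0:ℝ),(1:ℝ)) ((0:ℝ),(1:ℝ)))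
      (Icc (0:ℝ) T) := by
    have h2 : ContinuousOn (fderiv ℝ (fderiv ℝ (fun q : ℝ × ℝ => S q.1 q.2)))
        ((Ioi (0:ℝ)) ×ˢ (Ioi (0:ℝ))) :=
      (contDf hSmooth).continuousOn_fderiv_of_isOpen hUopen le_rfl
    exact (ContinuousLinearMap.apply ℝ ℝ (((0:ℝ),(1:ℝ)) : ℝ × ℝ)).continuous.comp_continuousOn
      ((ContinuousLinearMap.apply ℝ (ℝ×ℝ →L[ℝ] ℝ) (((0:ℝ),(1:ℝ)) : ℝ × ℝ)).continuous.comp_continuousOn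
        (h2.comp hγcont hmem))
  have hPcont : ContinuousOn P (Icc (0:ℝ) T) := by
    apply continuousOn_const.mul
    exact (ContinuousOn.inv₀ (by fun_prop) (fun σ hσ => (hpos σ hσ).ne'))
  have hXcont : ContinuousOn X (Icc (0:ℝ) T) := by
    apply Continuous.continuousOn; fun_prop
  have hqcont : ContinuousOn q (Icc (0:ℝ) T) := hDfcont.sub hPcont
  have hccont : ContinuousOn c (Icc (0:ℝ) T) :=
    (hDfcont.add hPcont).add ((continuousOn_const.mul hXcont).mul hD2cont)
  obtain ⟨C, hC⟩ := isCompact_Icc.exists_bound_of_continuousOn hccont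
  have hq0 : q 0 = 0 := by
    have h := (sx_eq hSmooth hε hx₀).symm
    simp only [hqdef, hγdef, hXdef, hPdef, mul_zero, add_zero, sub_zero, one_pow, mul_one,
      inv_one]
    rw [hp₀, ← h, sub_self]
  have hqzero : ∀ σ ∈ Icc (0:ℝ) T, q σ = 0 := by
    intro σ hσ
    have hgr := norm_le_gronwallBound_of_norm_deriv_right_le (K := C) (δ := 0) (ε := 0)
      hqcont
      (fun σ hσ => (hq' σ (Ico_subset_Icc_self hσ)).hasDerivWithinAt)
      (by rw [hq0]; simp)
      (fun σ hσ => by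
        rw [norm_mul]
        have h1 := hC σ (Ico_subset_Icc_self hσ)
        have := mul_le_mul_of_nonneg_right h1 (norm_nonneg (q σ))
        linarith)
      σ hσ
    rw [gronwallBound_ε0_δ0] at hgr
    exact norm_le_zero_iff.mp hgr
  -- the value function along the characteristic
  set g : ℝ → ℝ := fun σ => S (ε + σ) (X σ) + x₀ * p₀^2 * σ with hgdef
  have hg' : ∀ σ ∈ Icc (0:ℝ) T, HasDerivAt g 0 σ := by
    intro σ hσ
    have hmemσ := hmem σ hσ
    have hne := (hpos σ hσ).ne'
    have hεσ : 0 < ε + σ := by linarith [hσ.1]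
    have hXσ : 0 < X σ := mul_pos hx₀ (pow_pos (hpos σ hσ) 2)
    have h1 : HasDerivAt (fun σ => S (ε + σ) (X σ))
        (fderiv ℝ (fun q : ℝ × ℝ => S q.1 q.2) (γ σ)
          ((1, x₀ * (2 * (1 - p₀ * σ) * (-p₀))) : ℝ × ℝ)) σ :=
      (hasF hSmooth hmemσ).comp_hasDerivAt σ (hγ' σ)
    have h2 : HasDerivAt g
        (fderiv ℝ (fun q : ℝ × ℝ => S q.1 q.2) (γ σ)
          ((1, x₀ * (2 * (1 - p₀ * σ) * (-p₀))) : ℝ × ℝ) + x₀ * p₀^2) σ := by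
      have h := h1.add (((hasDerivAt_id σ).const_mul (x₀ * p₀^2)))
      rw [mul_one] at h
      exact h
    convert h2 using 1
    rw [evalD1]
    have hst : fderiv ℝ (fun q : ℝ × ℝ => S q.1 q.2) (γ σ) ((1:ℝ),(0:ℝ))
        = X σ * (fderiv ℝ (fun q : ℝ × ℝ => S q.1 q.2) (γ σ) ((0:ℝ),(1:ℝ)))^2 := by
      have := st_eq hSmooth hPDE hεσ hXσ
      exact this
    have hqσ : fderiv ℝ (fun q : ℝ × ℝ => S q.1 q.2) (γ σ) ((0:ℝ),(1:ℝ)) = P σ := by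
      have := hqzero σ hσ
      simp only [hqdef] at this
      linarith
    rw [hst, hqσ]
    simp only [hPdef, hXdef]
    field_simp
    ring
  have hgcont : ContinuousOn g (Icc (0:ℝ) T) :=
    fun σ hσ => ((hg' σ hσ).continuousAt).continuousWithinAt
  have hconst := constant_of_has_deriv_right_zero hgcont
    (fun σ hσ => (hg' σ (Ico_subset_Icc_self hσ)).hasDerivWithinAt) T
    (right_mem_Icc.mpr hT.le)
  simp only [hgdef, hXdef] at hconst
  have hεT : ε + T = t := by simp [hTdef]
  rw [hεT] at hconst
  rw [show x₀ * (1 - p₀ * 0)^2 = x₀ by ring] at hconst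
  rw [show ε + 0 = ε by ring] at hconst
  linarith [hconst]

theorem bd1 (hC1 : ContDiffOn ℝ 1 (fun q : ℝ × ℝ => S q.1 q.2) (Ici 0 ×ˢ Ioi 0))
    {x₀ : ℝ} (hx₀ : 0 < x₀) :
    Tendsto (fun ε => S ε x₀) (nhdsWithin 0 (Ioi 0)) (𝓝 (S 0 x₀)) := by
  have hcw : ContinuousWithinAt (fun q : ℝ × ℝ => S q.1 q.2) (Ici 0 ×ˢ Ioi 0) (0, x₀) :=
    hC1.continuousOn _ ⟨by norm_num, hx₀⟩
  have hι : Tendsto (fun ε : ℝ => ((ε, x₀) : ℝ × ℝ)) (nhdsWithin 0 (Ioi 0))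
      (nhdsWithin ((0:ℝ), x₀) (Ici 0 ×ˢ Ioi 0)) := by
    rw [tendsto_nhdsWithin_iff]
    constructor
    · exact ((continuous_id.prodMk continuous_const).tendsto 0).mono_left nhdsWithin_le_nhds
    · filter_upwards [self_mem_nhdsWithin] with ε hε
      exact ⟨show (0:ℝ) ≤ ε from le_of_lt hε, hx₀⟩
  exact hcw.tendsto.comp hι

theorem bd2 (hC1 : ContDiffOn ℝ 1 (fun q : ℝ × ℝ => S q.1 q.2) (Ici 0 ×ˢ Ioi 0))
    (hSmooth : ContDiffOn ℝ (⊤ : ℕ∞) (fun q : ℝ × ℝ => S q.1 q.2) (Ioi 0 ×ˢ Ioi 0))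
    {a : ℝ} (ha : 0 ≤ a) (hInit : ∀ x : ℝ, 0 < x → S 0 x = Real.log (a + x))
    {x₀ : ℝ} (hx₀ : 0 < x₀) :
    Tendsto (fun ε => deriv (fun y : ℝ => S ε y) x₀) (nhdsWithin 0 (Ioi 0))
      (𝓝 ((a + x₀)⁻¹)) := by
  have hVud : UniqueDiffOn ℝ ((Ici (0:ℝ)) ×ˢ (Ioi (0:ℝ))) :=
    (uniqueDiffOn_Ici 0).prod (isOpen_Ioi.uniqueDiffOn)
  have hcontD := hC1.continuousOn_fderivWithin hVud le_rfl
  have hmem0 : ((0:ℝ), x₀) ∈ (Ici (0:ℝ)) ×ˢ (Ioi (0:ℝ)) := ⟨by norm_num, hx₀⟩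
  -- identify the boundary derivative
  have hax : (0:ℝ) < a + x₀ := by linarith
  have hD : HasFDerivWithinAt (fun q : ℝ × ℝ => S q.1 q.2)
      (fderivWithin ℝ (fun q : ℝ × ℝ => S q.1 q.2) ((Ici (0:ℝ)) ×ˢ (Ioi (0:ℝ))) (0, x₀))
      ((Ici (0:ℝ)) ×ˢ (Ioi (0:ℝ))) (0, x₀) :=
    ((hC1.differentiableOn one_ne_zero) _ hmem0).hasFDerivWithinAt
  have hcomp : HasDerivWithinAt (fun y : ℝ => S 0 y)
      (fderivWithin ℝ (fun q : ℝ × ℝ => S q.1 q.2) ((Ici (0:ℝ)) ×ˢ (Ioi (0:ℝ))) (0, x₀)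
        ((0:ℝ),(1:ℝ))) (Ioi 0) x₀ := by
    have hcurve : HasDerivWithinAt (fun y : ℝ => ((0, y) : ℝ × ℝ)) (((0:ℝ),(1:ℝ)) : ℝ × ℝ)
        (Ioi 0) x₀ := lineV.hasDerivWithinAt
    exact hD.comp_hasDerivWithinAt x₀ hcurve (fun y hy => ⟨by norm_num, hy⟩)
  have hlog : HasDerivWithinAt (fun y : ℝ => S 0 y) ((a + x₀)⁻¹) (Ioi 0) x₀ := by
    have h1 : HasDerivAt (fun y : ℝ => Real.log (a + y)) ((a + x₀)⁻¹) x₀ := by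
      have := (Real.hasDerivAt_log hax.ne').comp x₀ (((hasDerivAt_id x₀).const_add a))
      exact this.congr_deriv (by simp)
    exact (h1.hasDerivWithinAt).congr (fun y hy => hInit y hy) (hInit x₀ hx₀)
  have hDval : fderivWithin ℝ (fun q : ℝ × ℝ => S q.1 q.2) ((Ici (0:ℝ)) ×ˢ (Ioi (0:ℝ))) (0, x₀)
      ((0:ℝ),(1:ℝ)) = (a + x₀)⁻¹ :=
    (uniqueDiffOn_Ioi 0 x₀ hx₀).eq_deriv _ hcomp hlog
  -- continuity of the within-derivative along the vertical boundary approach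
  have hι : Tendsto (fun ε : ℝ => ((ε, x₀) : ℝ × ℝ)) (nhdsWithin 0 (Ioi 0))
      (nhdsWithin ((0:ℝ), x₀) ((Ici (0:ℝ)) ×ˢ (Ioi (0:ℝ)))) := by
    rw [tendsto_nhdsWithin_iff]
    refine ⟨((continuous_id.prodMk continuous_const).tendsto 0).mono_left nhdsWithin_le_nhds, ?_⟩
    filter_upwards [self_mem_nhdsWithin] with ε hε
    exact ⟨show (0:ℝ) ≤ ε from le_of_lt hε, hx₀⟩
  have htend : Tendsto
      (fun ε : ℝ => fderivWithin ℝ (fun q : ℝ × ℝ => S q.1 q.2) ((Ici (0:ℝ)) ×ˢ (Ioi (0:ℝ)))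
        (ε, x₀) ((0:ℝ),(1:ℝ)))
      (nhdsWithin 0 (Ioi 0)) (𝓝 ((a + x₀)⁻¹)) := by
    rw [← hDval]
    exact ((ContinuousLinearMap.apply ℝ ℝ (((0:ℝ),(1:ℝ)) : ℝ × ℝ)).continuous.tendsto _).comp
      ((hcontD _ hmem0).tendsto.comp hι)
  apply htend.congr'
  filter_upwards [self_mem_nhdsWithin] with ε hε
  have hεpos : (0:ℝ) < ε := hε
  have hVn : ((Ici (0:ℝ)) ×ˢ (Ioi (0:ℝ))) ∈ 𝓝 ((ε, x₀) : ℝ × ℝ) :=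
    Filter.mem_of_superset (hUopen.mem_nhds ⟨hεpos, hx₀⟩)
      (prod_mono Ioi_subset_Ici_self subset_rfl)
  rw [fderivWithin_of_mem_nhds hVn, ← sx_eq hSmooth hεpos hx₀]

end CPI

open Set Filter Topology CPI

/-- For the PDE `∂S/∂t = x·(∂S/∂x)²` with initial condition `S(0,x) = log(|λ|² + x)`:
if `|λ| < √t`, then `lim_{x→0⁺} S(t,x) = log t − 1 + |λ|²/t`.  (This is the log potential of
the circular Brownian motion inside the disk of radius `√t`.) -/

theorem circular_potential_inside (lam : ℂ) (t : ℝ) (ht : 0 < t)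
    (hlam : ‖lam‖ < Real.sqrt t)
    (S : ℝ → ℝ → ℝ)
    (hC1 : ContDiffOn ℝ 1 (fun q : ℝ × ℝ => S q.1 q.2) (Ici 0 ×ˢ Ioi 0))
    (hSmooth : ContDiffOn ℝ (⊤ : ℕ∞) (fun q : ℝ × ℝ => S q.1 q.2) (Ioi 0 ×ˢ Ioi 0))
    (hPDE : ∀ s : ℝ, 0 < s → ∀ x : ℝ, 0 < x →
      HasDerivAt (fun u : ℝ => S u x) (x * (deriv (fun y : ℝ => S s y) x) ^ 2) s)
    (hInit : ∀ x : ℝ, 0 < x → S 0 x = Real.log (‖lam‖ ^ 2 + x)) :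
    Tendsto (fun x : ℝ => S t x) (nhdsWithin 0 (Ioi 0))
      (𝓝 (Real.log t - 1 + ‖lam‖ ^ 2 / t)) := by
  set a := ‖lam‖ ^ 2 with hadef
  have ha0 : 0 ≤ a := sq_nonneg _
  have hat : a < t := by
    have h1 : ‖lam‖ ^ 2 < Real.sqrt t ^ 2 :=
      pow_lt_pow_left₀ hlam (norm_nonneg lam) (by norm_num)
    rwa [Real.sq_sqrt ht.le] at h1
  have hta : 0 < t - a := by linarith
  -- Step B1 : exact value of S t along the image curve
  have hB1 : ∀ x₀ : ℝ, t - a < x₀ →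
      S t (x₀ * (1 - (a + x₀)⁻¹ * t)^2)
        = Real.log (a + x₀) - t * x₀ * ((a + x₀)⁻¹)^2 := by
    intro x₀ hx₀
    have hx₀pos : 0 < x₀ := lt_trans hta hx₀
    have hax : (0:ℝ) < a + x₀ := by linarith
    have htax : (a + x₀)⁻¹ * t < 1 := by
      have h := (div_lt_one hax).mpr (by linarith : t < a + x₀)
      rwa [div_eq_inv_mul] at h
    have hplim := bd2 hC1 hSmooth ha0 (fun x hx => hInit x hx) hx₀pos
    have hSlim := bd1 hC1 hx₀pos
    have hdmul : Tendsto (fun ε : ℝ => deriv (fun y : ℝ => S ε y) x₀ * (t - ε))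
        (nhdsWithin 0 (Ioi 0)) (𝓝 ((a + x₀)⁻¹ * (t - 0))) :=
      hplim.mul ((tendsto_const_nhds.sub tendsto_id).mono_left nhdsWithin_le_nhds)
    have hev1 : ∀ᶠ ε in nhdsWithin (0:ℝ) (Ioi 0),
        deriv (fun y : ℝ => S ε y) x₀ * (t - ε) < 1 := by
      apply hdmul.eventually_lt_const
      rwa [sub_zero]
    have hev2 : ∀ᶠ ε in nhdsWithin (0:ℝ) (Ioi 0), (0:ℝ) < ε := self_mem_nhdsWithin
    have hev3 : ∀ᶠ ε in nhdsWithin (0:ℝ) (Ioi 0), ε < t :=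
      mem_nhdsWithin_of_mem_nhds (Iio_mem_nhds ht)
    have hkey : ∀ᶠ ε in nhdsWithin (0:ℝ) (Ioi 0),
        S t (x₀ * (1 - deriv (fun y : ℝ => S ε y) x₀ * (t - ε))^2)
          = S ε x₀ - (t - ε) * x₀ * (deriv (fun y : ℝ => S ε y) x₀)^2 := by
      filter_upwards [hev1, hev2, hev3] with ε h1 h2 h3
      exact key hSmooth hPDE h3 h2 hx₀pos h1
    have hY : Tendsto (fun ε : ℝ => x₀ * (1 - deriv (fun y : ℝ => S ε y) x₀ * (t - ε))^2)
        (nhdsWithin 0 (Ioi 0)) (𝓝 (x₀ * (1 - (a + x₀)⁻¹ * (t - 0))^2)) :=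
      tendsto_const_nhds.mul (((tendsto_const_nhds.sub hdmul)).pow 2)
    rw [sub_zero] at hY
    have hyinfpos : 0 < x₀ * (1 - (a + x₀)⁻¹ * t)^2 := by
      have h2 : 0 < 1 - (a + x₀)⁻¹ * t := by linarith
      exact mul_pos hx₀pos (pow_pos h2 2)
    have hconts : ContinuousAt (fun y : ℝ => S t y) (x₀ * (1 - (a + x₀)⁻¹ * t)^2) := by
      have hc : ContinuousAt (fun q : ℝ × ℝ => S q.1 q.2)
          ((t, x₀ * (1 - (a + x₀)⁻¹ * t)^2) : ℝ × ℝ) :=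
        hSmooth.continuousOn.continuousAt (hUopen.mem_nhds ⟨ht, hyinfpos⟩)
      exact hc.comp (Continuous.continuousAt (continuous_const.prodMk continuous_id))
    have hLHS : Tendsto (fun ε : ℝ => S t (x₀ * (1 - deriv (fun y : ℝ => S ε y) x₀ * (t - ε))^2))
        (nhdsWithin 0 (Ioi 0)) (𝓝 (S t (x₀ * (1 - (a + x₀)⁻¹ * t)^2))) :=
      hconts.tendsto.comp hY
    have hRHS : Tendsto (fun ε : ℝ => S ε x₀ - (t - ε) * x₀ * (deriv (fun y : ℝ => S ε y) x₀)^2)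
        (nhdsWithin 0 (Ioi 0)) (𝓝 (S 0 x₀ - (t - 0) * x₀ * ((a + x₀)⁻¹)^2)) :=
      hSlim.sub ((((tendsto_const_nhds.sub (tendsto_id.mono_left nhdsWithin_le_nhds)).mul
        tendsto_const_nhds)).mul (hplim.pow 2))
    have h2 : Tendsto (fun ε : ℝ => S t (x₀ * (1 - deriv (fun y : ℝ => S ε y) x₀ * (t - ε))^2))
        (nhdsWithin 0 (Ioi 0)) (𝓝 (S 0 x₀ - (t - 0) * x₀ * ((a + x₀)⁻¹)^2)) :=
      hRHS.congr' (hkey.mono fun ε h => h.symm)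
    have hfin := tendsto_nhds_unique hLHS h2
    rw [hfin, hInit x₀ hx₀pos, sub_zero]
  -- Step B2 : conclude the limit
  set F : ℝ → ℝ := fun y => Real.log (a + y) - t * y * ((a + y)⁻¹)^2 with hFdef
  have hFt : F (t - a) = Real.log t - 1 + a / t := by
    simp only [hFdef]
    rw [show a + (t - a) = t by ring]
    field_simp
    ring
  have hFcont : ContinuousAt F (t - a) := by
    have hne : a + (t - a) ≠ 0 := by rw [show a + (t - a) = t by ring]; exact ht.ne'
    have h1 : ContinuousAt (fun y : ℝ => a + y) (t - a) := by fun_prop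
    exact ((Real.continuousAt_log hne).comp h1).sub
      (((continuousAt_const.mul continuousAt_id)).mul ((h1.inv₀ hne).pow 2))
  rw [Metric.tendsto_nhdsWithin_nhds]
  intro ε' hε'
  obtain ⟨δ₁, hδ₁pos, hδ₁⟩ := Metric.continuousAt_iff.1 hFcont ε' hε'
  set x₁ := t - a + δ₁ / 2 with hx₁def
  have hx₁ : t - a < x₁ := by simp [hx₁def]; linarith
  have hax₁ : t < a + x₁ := by simp [hx₁def]; linarith
  have hax₁pos : (0:ℝ) < a + x₁ := by linarith
  set η := x₁ * (1 - (a + x₁)⁻¹ * t)^2 with hηdef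
  have hη : 0 < η := by
    have h := (div_lt_one hax₁pos).mpr hax₁
    rw [div_eq_inv_mul] at h
    exact mul_pos (by linarith) (pow_pos (by linarith) 2)
  refine ⟨η, hη, ?_⟩
  intro x hxpos hdist
  have hx0 : 0 < x := hxpos
  have hxη : x < η := by
    rw [Real.dist_eq, sub_zero, abs_of_pos hx0] at hdist
    exact hdist
  -- IVT to find the preimage x₀
  have hφc : ContinuousOn (fun y : ℝ => y * (1 - (a + y)⁻¹ * t)^2) (Icc (t - a) x₁) := by
    have hne : ∀ y ∈ Icc (t - a) x₁, a + y ≠ 0 := by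
      intro y hy
      have := hy.1
      have : t ≤ a + y := by linarith
      linarith
    exact continuousOn_id.mul ((continuousOn_const.sub
      ((ContinuousOn.inv₀ (by fun_prop) hne).mul continuousOn_const)).pow 2)
  have hφa : (t - a) * (1 - (a + (t - a))⁻¹ * t)^2 = 0 := by
    rw [show a + (t - a) = t by ring, inv_mul_cancel₀ ht.ne', sub_self]
    ring
  have hsub := intermediate_value_Ioo (le_of_lt hx₁) hφc
  rw [hφa] at hsub
  obtain ⟨x₀, hx₀mem, hφx₀⟩ := hsub ⟨hx0, hxη⟩
  have hSx : S t x = F x₀ := by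
    rw [← hφx₀]
    exact hB1 x₀ hx₀mem.1
  rw [hSx]
  have : dist (F x₀) (F (t - a)) < ε' := by
    apply hδ₁
    rw [Real.dist_eq, abs_of_pos (by linarith [hx₀mem.1] : (0:ℝ) < x₀ - (t - a))]
    have := hx₀mem.2
    simp only [hx₁def] at this
    linarith
  rwa [hFt] at this
end

section
/- Define the Hamiltonian H: ℝ⁶ → ℝ by H(a, b, x, p_a, p_b, p_x) = −x·p_x·(1 + (a² + b²)·p_x − x·p_x − a·p_a − b·p_b). Suppose (a(t), b(t), x(t), p_a(t), p_b(t), p_x(t)) is a differentiable curve on an interval I ⊆ ℝ satisfying Hamilton's equations: da/dt = ∂H/∂p_a, db/dt = ∂H/∂p_b, dx/dt = ∂H/∂p_x, dp_a/dt = −∂H/∂a, dp_b/dt = −∂H/∂b, dp_x/dt = −∂H/∂x. Then the quantity Ψ(t) = x(t)·p_x(t) + (1/2)·(a(t)·p_a(t) + b(t)·p_b(t)) is constant along the solution, i.e., dΨ/dt = 0 on I. -/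
/-!
`Ψ = x·p_x + (a·p_a + b·p_b)/2` is the Noether charge of the scaling
`(a, b, x, p_a, p_b, p_x) ↦ (e^{s/2} a, e^{s/2} b, e^s x, e^{-s/2} p_a, e^{-s/2} p_b, e^{-s} p_x)`,
which leaves `H` invariant because `H` depends only on `x·p_x`, `a·p_a`, `b·p_b` and `(a² + b²)·p_x`.
By Hamilton's equations `dΨ/dt` is minus the derivative of `H` along this scaling at `s = 0`,
hence zero.
-/

def fmbHamiltonian (a b x pa pb px : ℝ) : ℝ :=
  -x * px * (1 + (a ^ 2 + b ^ 2) * px - x * px - a * pa - b * pb)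

lemma deriv_eq_of_quadratic {f : ℝ → ℝ} {α β γ : ℝ} (hf : ∀ q, f q = α + β * q + γ * q ^ 2)
    (q₀ : ℝ) : deriv f q₀ = β + 2 * γ * q₀ := by
  have hquad : HasDerivAt (fun q => α + β * q + γ * q ^ 2) (β * 1 + γ * (2 * q₀ ^ 1)) q₀ :=
    (((hasDerivAt_id q₀).const_mul β).const_add α).add ((hasDerivAt_pow 2 q₀).const_mul γ)
  rw [funext hf, hquad.deriv]
  ring

section Partials

variable (a b x pa pb px : ℝ)

lemma deriv_fmbHamiltonian_a :
    deriv (fun q => fmbHamiltonian q b x pa pb px) a = -x * px * (2 * a * px - pa) := by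
  rw [deriv_eq_of_quadratic (α := -x * px * (1 + b ^ 2 * px - x * px - b * pb))
    (β := x * px * pa) (γ := -x * px * px) fun q => by unfold fmbHamiltonian; ring]
  ring

lemma deriv_fmbHamiltonian_b :
    deriv (fun q => fmbHamiltonian a q x pa pb px) b = -x * px * (2 * b * px - pb) := by
  rw [deriv_eq_of_quadratic (α := -x * px * (1 + a ^ 2 * px - x * px - a * pa))
    (β := x * px * pb) (γ := -x * px * px) fun q => by unfold fmbHamiltonian; ring]
  ring

lemma deriv_fmbHamiltonian_x :
    deriv (fun q => fmbHamiltonian a b q pa pb px) x =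
      -px * (1 + (a ^ 2 + b ^ 2) * px - 2 * x * px - a * pa - b * pb) := by
  rw [deriv_eq_of_quadratic (α := 0) (β := -px * (1 + (a ^ 2 + b ^ 2) * px - a * pa - b * pb))
    (γ := px * px) fun q => by unfold fmbHamiltonian; ring]
  ring

lemma deriv_fmbHamiltonian_pa :
    deriv (fun q => fmbHamiltonian a b x q pb px) pa = a * x * px := by
  rw [deriv_eq_of_quadratic (α := -x * px * (1 + (a ^ 2 + b ^ 2) * px - x * px - b * pb))
    (β := x * px * a) (γ := 0) fun q => by unfold fmbHamiltonian; ring]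
  ring

lemma deriv_fmbHamiltonian_pb :
    deriv (fun q => fmbHamiltonian a b x pa q px) pb = b * x * px := by
  rw [deriv_eq_of_quadratic (α := -x * px * (1 + (a ^ 2 + b ^ 2) * px - x * px - a * pa))
    (β := x * px * b) (γ := 0) fun q => by unfold fmbHamiltonian; ring]
  ring

lemma deriv_fmbHamiltonian_px :
    deriv (fun q => fmbHamiltonian a b x pa pb q) px =
      -x * (1 + 2 * (a ^ 2 + b ^ 2) * px - 2 * x * px - a * pa - b * pb) := by
  rw [deriv_eq_of_quadratic (α := 0) (β := -x * (1 - a * pa - b * pb))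
    (γ := -x * (a ^ 2 + b ^ 2 - x)) fun q => by unfold fmbHamiltonian; ring]
  ring

lemma fmbHamiltonian_scaling_derivative_eq_zero :
    x * deriv (fun q => fmbHamiltonian a b q pa pb px) x
      - px * deriv (fun q => fmbHamiltonian a b x pa pb q) px
      + (a * deriv (fun q => fmbHamiltonian q b x pa pb px) a
        - pa * deriv (fun q => fmbHamiltonian a b x q pb px) pa
        + b * deriv (fun q => fmbHamiltonian a q x pa pb px) b
        - pb * deriv (fun q => fmbHamiltonian a b x pa q px) pb) / 2 = 0 := by
  rw [deriv_fmbHamiltonian_a, deriv_fmbHamiltonian_b, deriv_fmbHamiltonian_x,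
    deriv_fmbHamiltonian_pa, deriv_fmbHamiltonian_pb, deriv_fmbHamiltonian_px]
  ring

end Partials

/-- For the Hamiltonian `H(a,b,x,p_a,p_b,p_x) = −x·p_x·(1 + (a²+b²)p_x − x·p_x − a·p_a − b·p_b)`
of the free multiplicative Brownian motion, the quantity
`Ψ = x·p_x + (1/2)(a·p_a + b·p_b)` is a constant of motion along any solution of
Hamilton's equations. -/
theorem constant_of_motion
    (H : ℝ → ℝ → ℝ → ℝ → ℝ → ℝ → ℝ)
    (hH : ∀ a b x pa pb px : ℝ,
      H a b x pa pb px = -x * px * (1 + (a ^ 2 + b ^ 2) * px - x * px - a * pa - b * pb))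
    (I : Set ℝ) (a b x pa pb px : ℝ → ℝ)
    (ha : ∀ t ∈ I, HasDerivAt a
      (deriv (fun q => H (a t) (b t) (x t) q (pb t) (px t)) (pa t)) t)
    (hb : ∀ t ∈ I, HasDerivAt b
      (deriv (fun q => H (a t) (b t) (x t) (pa t) q (px t)) (pb t)) t)
    (hx : ∀ t ∈ I, HasDerivAt x
      (deriv (fun q => H (a t) (b t) (x t) (pa t) (pb t) q) (px t)) t)
    (hpa : ∀ t ∈ I, HasDerivAt pa
      (-(deriv (fun q => H q (b t) (x t) (pa t) (pb t) (px t)) (a t))) t)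
    (hpb : ∀ t ∈ I, HasDerivAt pb
      (-(deriv (fun q => H (a t) q (x t) (pa t) (pb t) (px t)) (b t))) t)
    (hpx : ∀ t ∈ I, HasDerivAt px
      (-(deriv (fun q => H (a t) (b t) q (pa t) (pb t) (px t)) (x t))) t) :
    ∀ t ∈ I, HasDerivAt
      (fun u : ℝ => x u * px u + (1 / 2) * (a u * pa u + b u * pb u)) 0 t := by
  obtain rfl : H = fmbHamiltonian := by
    funext a b x pa pb px
    exact hH a b x pa pb px
  intro t ht
  have hΨ := ((hx t ht).mul (hpx t ht)).add
    ((((ha t ht).mul (hpa t ht)).add ((hb t ht).mul (hpb t ht))).const_mul (1 / 2))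
  refine hΨ.congr_deriv ?_
  linarith [fmbHamiltonian_scaling_derivative_eq_zero (a t) (b t) (x t) (pa t) (pb t) (px t)]
end

section
/- For λ ∈ ℂ∖{0}, define T(λ) = |λ−1|²·log(|λ|²)/(|λ|²−1) when |λ| ≠ 1, and T(λ) = |λ−1|² when |λ| = 1 (filling in the removable singularity, since log(r)/(r−1) → 1 as r → 1). For t > 0 define f_t(λ) = λ·exp((t/2)·(1+λ)/(1−λ)) for λ ≠ 1. Then for every λ ∈ ℂ∖{0,1} with T(λ) = t, one has |f_t(λ)| = 1; that is, f_t maps the boundary set {λ : T(λ) = t} of the domain Σ_t into the unit circle. -/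
/-!
Since `Re((1+λ)/(1−λ)) = (1−|λ|²)/|1−λ|²`, the equation `T(λ) = t` says exactly that
`(t/2)·Re((1+λ)/(1−λ)) = −log |λ|`, whence `|f_t(λ)| = |λ|·e^{−log |λ|} = 1`.
-/

/-- Biane's function `T(λ) = |λ−1|²·log(|λ|²)/(|λ|²−1)`, with the removable singularity at
`|λ| = 1` filled in by `T(λ) = |λ−1|²`. -/
noncomputable def bianeT (lam : ℂ) : ℝ :=
  if ‖lam‖ = 1 then ‖lam - 1‖ ^ 2
  else ‖lam - 1‖ ^ 2 * Real.log (‖lam‖ ^ 2) / (‖lam‖ ^ 2 - 1)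

theorem Complex.re_one_add_div_one_sub (z : ℂ) :
    ((1 + z) / (1 - z)).re = (1 - ‖z‖ ^ 2) / ‖z - 1‖ ^ 2 := by
  rw [Complex.div_re, ← add_div, norm_sub_rev, ← Complex.normSq_eq_norm_sq,
    Complex.sq_norm, Complex.normSq_apply, Complex.normSq_apply]
  congr 1
  simp only [Complex.add_re, Complex.sub_re, Complex.one_re, Complex.add_im, Complex.sub_im,
    Complex.one_im]
  ring

theorem bianeT_mul_re_one_add_div_one_sub (z : ℂ) :
    bianeT z * ((1 + z) / (1 - z)).re = -Real.log (‖z‖ ^ 2) := by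
  rw [Complex.re_one_add_div_one_sub, bianeT]
  split_ifs with hz
  · simp [hz]
  · have hsq : ‖z‖ ^ 2 - 1 ≠ 0 := by
      rwa [sub_ne_zero, ne_eq, pow_eq_one_iff_of_nonneg (norm_nonneg z) two_ne_zero]
    have hz1 : ‖z - 1‖ ≠ 0 := by
      rw [norm_ne_zero_iff, sub_ne_zero]
      rintro rfl
      exact hz norm_one
    field_simp
    ring

theorem ft_maps_boundary_to_circle_general (t : ℝ) (lam : ℂ)
    (h0 : lam ≠ 0) (hT : bianeT lam = t) :
    ‖lam * Complex.exp ((t / 2 : ℂ) * (1 + lam) / (1 - lam))‖ = 1 := by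
  have hre : ((t / 2 : ℂ) * (1 + lam) / (1 - lam)).re = -Real.log ‖lam‖ := by
    have hlog := bianeT_mul_re_one_add_div_one_sub lam
    rw [hT, Real.log_pow] at hlog
    rw [mul_div_assoc, ← Complex.ofReal_ofNat, ← Complex.ofReal_div, Complex.re_ofReal_mul]
    linarith
  rw [norm_mul, Complex.norm_exp, hre, Real.exp_neg, Real.exp_log (norm_pos_iff.mpr h0)]
  exact mul_inv_cancel₀ (norm_ne_zero_iff.mpr h0)

/-- The map `f_t(λ) = λ·e^{(t/2)(1+λ)/(1−λ)}` sends the boundary set `{λ : T(λ) = t}` of the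
domain `Σ_t` into the unit circle. -/
theorem ft_maps_boundary_to_circle (t : ℝ) (ht : 0 < t) (lam : ℂ)
    (h0 : lam ≠ 0) (h1 : lam ≠ 1) (hT : bianeT lam = t) :
    ‖lam * Complex.exp ((t / 2 : ℂ) * (1 + lam) / (1 - lam))‖ = 1 :=
  ft_maps_boundary_to_circle_general t lam h0 hT
end
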